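/- (Lemma 1, after communication.) For any team communication/control strategy (f,g) and any adversary strategy gᵃ, at every time t⁺ and for every realization (c_{t⁺},d_{t⁺}) of (C_{t⁺},D_{t⁺}) with positive probability and every realization (x_{1:t},u_{1:t}) of the team's states and actions, the conditional distribution factorizes across agents: P(x_{1:t},u_{1:t} | c_{t⁺},d_{t⁺}) = P(x¹_{1:t},u¹_{1:t} | c_{t⁺},d_{t⁺}) · P(x²_{1:t},u²_{1:t} | c_{t⁺},d_{t⁺}). Moreover, for each i, the factor P(xⁱ_{1:t},uⁱ_{1:t} | c_{t⁺},d_{t⁺}) depends only on agent i's strategy (fⁱ,gⁱ), not on the other agent's strategy nor on the adversary's strategy. -/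
import Mathlib


open Finset
open scoped Classical BigOperators

namespace TA

/-- The primitive model of the team-vs-adversary control system (Section II of the paper):
finite horizon `T`, finite global/local state spaces, finite action spaces, independent
initial states, controlled Markovian dynamics given by transition kernels, an erasure
parameter `pe`, an observation kernel `obs` for the adversary's observation `Y_t`,
a stage cost `cost` and a communication cost `commCost`. -/
structure Model where
  T : ℕ
  hT : 0 < T
  X0 : Type
  X1 : Type
  X2 : Type
  U1 : Type
  U2 : Type
  Ua : Type
  Y : Type
  [fX0 : Fintype X0]
  [fX1 : Fintype X1]
  [fX2 : Fintype X2]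
  [fU1 : Fintype U1]
  [fU2 : Fintype U2]
  [fUa : Fintype Ua]
  [fY : Fintype Y]
  [nX0 : Nonempty X0]
  [nX1 : Nonempty X1]
  [nX2 : Nonempty X2]
  [nU1 : Nonempty U1]
  [nU2 : Nonempty U2]
  [nUa : Nonempty Ua]
  [nY : Nonempty Y]
  init0 : X0 → ℝ
  init1 : X1 → ℝ
  init2 : X2 → ℝ
  trans0 : X0 → Ua → X0 → ℝ
  trans1 : X0 → X1 → U1 → X1 → ℝ
  trans2 : X0 → X2 → U2 → X2 → ℝ
  pe : X0 → ℝ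
  obs : Option (X1 × X2) → Bool × Bool → X0 → Y → ℝ
  cost : ℕ → X0 → X1 × X2 → U1 × U2 → Ua → ℝ
  commCost : X0 → X1 × X2 → ℝ
  init0_nonneg : ∀ x, 0 ≤ init0 x
  init1_nonneg : ∀ x, 0 ≤ init1 x
  init2_nonneg : ∀ x, 0 ≤ init2 x
  init0_sum : ∑ x, init0 x = 1
  init1_sum : ∑ x, init1 x = 1
  init2_sum : ∑ x, init2 x = 1
  trans0_nonneg : ∀ x u x', 0 ≤ trans0 x u x'
  trans1_nonneg : ∀ x0 x u x', 0 ≤ trans1 x0 x u x'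
  trans2_nonneg : ∀ x0 x u x', 0 ≤ trans2 x0 x u x'
  trans0_sum : ∀ x u, ∑ x', trans0 x u x' = 1
  trans1_sum : ∀ x0 x u, ∑ x', trans1 x0 x u x' = 1
  trans2_sum : ∀ x0 x u, ∑ x', trans2 x0 x u x' = 1
  pe_nonneg : ∀ x, 0 ≤ pe x
  pe_le_one : ∀ x, pe x ≤ 1
  obs_nonneg : ∀ z m x y, 0 ≤ obs z m x y
  obs_sum : ∀ z m x, ∑ y, obs z m x y = 1

attribute [instance] Model.fX0 Model.fX1 Model.fX2 Model.fU1 Model.fU2 Model.fUa Model.fY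
attribute [instance] Model.nX0 Model.nX1 Model.nX2 Model.nU1 Model.nU2 Model.nUa Model.nY

/-- A full system trajectory over the horizon: global states, local states, communication
decisions, messages over the erasure channel, adversary observations, and all actions. -/
abbrev Traj (M : Model) :=
  (Fin M.T → M.X0) × (Fin M.T → M.X1) × (Fin M.T → M.X2) ×
  (Fin M.T → Bool) × (Fin M.T → Bool) × (Fin M.T → Option (M.X1 × M.X2)) ×
  (Fin M.T → M.Y) × (Fin M.T → M.U1) × (Fin M.T → M.U2) × (Fin M.T → M.Ua)

def idx (M : Model) (t : ℕ) : Fin M.T := if h : t < M.T then ⟨t, h⟩ else ⟨0, M.hT⟩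

variable {M : Model}

def X0v (ω : Traj M) (t : ℕ) : M.X0 := ω.1 (idx M t)
def X1v (ω : Traj M) (t : ℕ) : M.X1 := ω.2.1 (idx M t)
def X2v (ω : Traj M) (t : ℕ) : M.X2 := ω.2.2.1 (idx M t)
def M1v (ω : Traj M) (t : ℕ) : Bool := ω.2.2.2.1 (idx M t)
def M2v (ω : Traj M) (t : ℕ) : Bool := ω.2.2.2.2.1 (idx M t)
def Zv (ω : Traj M) (t : ℕ) : Option (M.X1 × M.X2) := ω.2.2.2.2.2.1 (idx M t)
def Yv (ω : Traj M) (t : ℕ) : M.Y := ω.2.2.2.2.2.2.1 (idx M t)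
def U1v (ω : Traj M) (t : ℕ) : M.U1 := ω.2.2.2.2.2.2.2.1 (idx M t)
def U2v (ω : Traj M) (t : ℕ) : M.U2 := ω.2.2.2.2.2.2.2.2.1 (idx M t)
def UAv (ω : Traj M) (t : ℕ) : M.Ua := ω.2.2.2.2.2.2.2.2.2 (idx M t)
def Mv (ω : Traj M) (t : ℕ) : Bool × Bool := (M1v ω t, M2v ω t)

/-- The list of values `f 0, f 1, …, f (t-1)` (a "prefix" of a stochastic process). -/
def pre {α : Type _} (t : ℕ) (f : ℕ → α) : List α := (List.range t).map f

/-- Realizations of agent 1's information `I¹_t` (resp. `I¹_{t⁺}`):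
`(X⁰_{1:t}, X¹_{1:t}, U¹_{1:t-1}, M_{1:t-1}, Z^er_{1:t-1}, Uᵃ_{1:t-1}, Y_{1:t-1})`. -/
abbrev Hist1 (M : Model) :=
  List M.X0 × List M.X1 × List M.U1 × List (Bool × Bool) ×
  List (Option (M.X1 × M.X2)) × List M.Ua × List M.Y

/-- Realizations of agent 2's information `I²_t` (resp. `I²_{t⁺}`). -/
abbrev Hist2 (M : Model) :=
  List M.X0 × List M.X2 × List M.U2 × List (Bool × Bool) ×
  List (Option (M.X1 × M.X2)) × List M.Ua × List M.Y

/-- Realizations of the team's common information `C^team_t = I¹_t ∩ I²_t`. -/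
abbrev HistC (M : Model) :=
  List M.X0 × List (Bool × Bool) × List (Option (M.X1 × M.X2)) × List M.Ua × List M.Y

def info1 (t : ℕ) (ω : Traj M) : Hist1 M :=
  (pre (t+1) (X0v ω), pre (t+1) (X1v ω), pre t (U1v ω), pre t (Mv ω),
   pre t (Zv ω), pre t (UAv ω), pre t (Yv ω))

def info1p (t : ℕ) (ω : Traj M) : Hist1 M :=
  (pre (t+1) (X0v ω), pre (t+1) (X1v ω), pre t (U1v ω), pre (t+1) (Mv ω),
   pre (t+1) (Zv ω), pre t (UAv ω), pre (t+1) (Yv ω))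

def info2 (t : ℕ) (ω : Traj M) : Hist2 M :=
  (pre (t+1) (X0v ω), pre (t+1) (X2v ω), pre t (U2v ω), pre t (Mv ω),
   pre t (Zv ω), pre t (UAv ω), pre t (Yv ω))

def info2p (t : ℕ) (ω : Traj M) : Hist2 M :=
  (pre (t+1) (X0v ω), pre (t+1) (X2v ω), pre t (U2v ω), pre (t+1) (Mv ω),
   pre (t+1) (Zv ω), pre t (UAv ω), pre (t+1) (Yv ω))

/-- The team's common information `C^team_t` before communication at time `t`. -/
def teamCom (t : ℕ) (ω : Traj M) : HistC M :=
  (pre (t+1) (X0v ω), pre t (Mv ω), pre t (Zv ω), pre t (UAv ω), pre t (Yv ω))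

/-- The team's common information `C^team_{t⁺}` after communication at time `t`. -/
def teamComP (t : ℕ) (ω : Traj M) : HistC M :=
  (pre (t+1) (X0v ω), pre (t+1) (Mv ω), pre (t+1) (Zv ω), pre t (UAv ω), pre (t+1) (Yv ω))

/-- A behavioral communication/control strategy pair `(f,g) = (f¹,f²,g¹,g²)` for the team:
`fⁱ_t` selects a distribution on `{0,1}` for `Mⁱ_t` given `Iⁱ_t`; `gⁱ_t` selects a
distribution on `𝒰ⁱ` for `Uⁱ_t` given `Iⁱ_{t⁺}`. -/
structure TeamStrategy (M : Model) where
  f1 : ℕ → Hist1 M → Bool → ℝ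
  f2 : ℕ → Hist2 M → Bool → ℝ
  g1 : ℕ → Hist1 M → M.U1 → ℝ
  g2 : ℕ → Hist2 M → M.U2 → ℝ
  f1_nonneg : ∀ t h m, 0 ≤ f1 t h m
  f2_nonneg : ∀ t h m, 0 ≤ f2 t h m
  g1_nonneg : ∀ t h u, 0 ≤ g1 t h u
  g2_nonneg : ∀ t h u, 0 ≤ g2 t h u
  f1_sum : ∀ t h, ∑ m, f1 t h m = 1
  f2_sum : ∀ t h, ∑ m, f2 t h m = 1
  g1_sum : ∀ t h, ∑ u, g1 t h u = 1
  g2_sum : ∀ t h, ∑ u, g2 t h u = 1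

/-- A behavioral strategy for the adversary: `gᵃ_t` selects a distribution on `𝒰ᵃ`
given the adversary's information `Iᵃ_{t⁺}`, whose realizations live in `A`. -/
structure AdvStrategy (M : Model) (A : Type _) where
  ga : ℕ → A → M.Ua → ℝ
  ga_nonneg : ∀ t a u, 0 ≤ ga t a u
  ga_sum : ∀ t a, ∑ u, ga t a u = 1

/-- The kernel of the erasure channel: if `M^or_t = 0`, no message; if `M^or_t = 1`, the
joint local state is delivered w.p. `1 - pe(x⁰)` and erased w.p. `pe(x⁰)`. -/
noncomputable def zKer (M : Model) (x0 : M.X0) (m : Bool × Bool) (x : M.X1 × M.X2)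
    (z : Option (M.X1 × M.X2)) : ℝ :=
  if m = (false, false) then (if z = none then 1 else 0)
  else
    match z with
    | none => M.pe x0
    | some x' => if x' = x then 1 - M.pe x0 else 0

/-- The probability of a full trajectory under the team strategy `σ`, the adversary
strategy `γ`, where `iap t ω` is the realization of the adversary's information
`Iᵃ_{t⁺}` along `ω` (this parametrizes the adversary's information structure). -/
noncomputable def prob (σ : TeamStrategy M) {A : Type _} (γ : AdvStrategy M A)
    (iap : ℕ → Traj M → A) (ω : Traj M) : ℝ :=
  M.init0 (X0v ω 0) * M.init1 (X1v ω 0) * M.init2 (X2v ω 0) *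
  (∏ t ∈ Finset.range M.T,
    (σ.f1 t (info1 t ω) (M1v ω t) * σ.f2 t (info2 t ω) (M2v ω t) *
     zKer M (X0v ω t) (Mv ω t) (X1v ω t, X2v ω t) (Zv ω t) *
     M.obs (Zv ω t) (Mv ω t) (X0v ω t) (Yv ω t) *
     σ.g1 t (info1p t ω) (U1v ω t) * σ.g2 t (info2p t ω) (U2v ω t) *
     γ.ga t (iap t ω) (UAv ω t))) *
  (∏ t ∈ Finset.range (M.T - 1),
    (M.trans0 (X0v ω t) (UAv ω t) (X0v ω (t+1)) *
     M.trans1 (X0v ω t) (X1v ω t) (U1v ω t) (X1v ω (t+1)) *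
     M.trans2 (X0v ω t) (X2v ω t) (U2v ω t) (X2v ω (t+1))))

/-- Probability of an event (a set of trajectories). -/
noncomputable def pr (σ : TeamStrategy M) {A : Type _} (γ : AdvStrategy M A)
    (iap : ℕ → Traj M → A) (E : Traj M → Prop) : ℝ :=
  ∑ ω : Traj M, if E ω then prob σ γ iap ω else 0

/-- Conditional probability `P(F | E)`. -/
noncomputable def cpr (σ : TeamStrategy M) {A : Type _} (γ : AdvStrategy M A)
    (iap : ℕ → Traj M → A) (E F : Traj M → Prop) : ℝ :=
  pr σ γ iap (fun ω => F ω ∧ E ω) / pr σ γ iap E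

/-- Total cost `Σ_t c_t(X⁰_t,X_t,U_t,Uᵃ_t) + ρ(X⁰_t,X_t) 1{M^or_t = 1}` along a trajectory. -/
noncomputable def totalCost (ω : Traj M) : ℝ :=
  ∑ t ∈ Finset.range M.T,
    (M.cost t (X0v ω t) (X1v ω t, X2v ω t) (U1v ω t, U2v ω t) (UAv ω t) +
     (if (M1v ω t || M2v ω t) then M.commCost (X0v ω t) (X1v ω t, X2v ω t) else 0))

/-- Expected total cost `J((f,g),gᵃ)`. -/
noncomputable def J (σ : TeamStrategy M) {A : Type _} (γ : AdvStrategy M A)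
    (iap : ℕ → Traj M → A) : ℝ :=
  ∑ ω : Traj M, prob σ γ iap ω * totalCost ω

end TA
namespace TA

/-- An abstract information structure for the adversary satisfying the structural parts of
Assumption 1: the common information `C_t = Iᵃ_t` (resp. `C_{t⁺} = Iᵃ_{t⁺}`) and the team's
common private information `D_t = P¹_t ∩ P²_t` (resp. `D_{t⁺}`) are deterministic functions
of the trajectory; together, `(C_t, D_t)` carries exactly the team's common information
`C^team_t = I¹_t ∩ I²_t` (nestedness: `C_t ⊆ I¹_t ∩ I²_t` and `C_t ∪ D_t = C^team_t`);
and the adversary's information grows with time (monotonicity: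
`Iᵃ_t ⊆ Iᵃ_{t⁺} ⊆ Iᵃ_{t+1}`, expressed as: finer information determines coarser one). -/
structure InfoStructure (M : Model) where
  C : Type
  D : Type
  infoC : ℕ → Traj M → C
  infoCp : ℕ → Traj M → C
  infoD : ℕ → Traj M → D
  infoDp : ℕ → Traj M → D
  cd_team : ∀ (t : ℕ) (ω ω' : Traj M),
    (infoC t ω = infoC t ω' ∧ infoD t ω = infoD t ω') ↔ teamCom t ω = teamCom t ω'
  cdp_team : ∀ (t : ℕ) (ω ω' : Traj M),
    (infoCp t ω = infoCp t ω' ∧ infoDp t ω = infoDp t ω') ↔ teamComP t ω = teamComP t ω'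
  mono1 : ∀ (t : ℕ) (ω ω' : Traj M), infoCp t ω = infoCp t ω' → infoC t ω = infoC t ω'
  mono2 : ∀ (t : ℕ) (ω ω' : Traj M), infoC (t+1) ω = infoC (t+1) ω' → infoCp t ω = infoCp t ω'

end TA

namespace TA

section Lemma1Proof

variable {M : Model}

lemma pre_succ {α : Type _} (k : ℕ) (f : ℕ → α) : pre (k+1) f = pre k f ++ [f k] := by
  simp [pre, List.range_succ]

lemma pre_congr {α : Type _} {k : ℕ} {f g : ℕ → α} (h : ∀ s < k, f s = g s) :
    pre k f = pre k g :=
  List.map_congr_left fun s hs => h s (List.mem_range.mp hs)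

lemma pre_eq_imp {α : Type _} : ∀ {k : ℕ} {f g : ℕ → α},
    pre k f = pre k g → ∀ s < k, f s = g s := by
  intro k
  induction k with
  | zero => intro f g _ s hs; omega
  | succ k ih =>
    intro f g h s hs
    rw [pre_succ, pre_succ] at h
    obtain ⟨h1, h2⟩ := List.append_inj' h rfl
    rcases Nat.lt_succ_iff_lt_or_eq.mp hs with hs' | hs'
    · exact ih h1 s hs'
    · subst hs'; exact List.singleton_injective h2

lemma idx_lt {s : ℕ} (hs : s < M.T) : idx M s = ⟨s, hs⟩ := dif_pos hs

/-- The tuple of all coordinates of the trajectory at a given time index. -/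
def tupleAt (ω : Traj M) (j : Fin M.T) :
    M.X0 × M.X1 × M.X2 × Bool × Bool × Option (M.X1 × M.X2) × M.Y × M.U1 × M.U2 × M.Ua :=
  (ω.1 j, ω.2.1 j, ω.2.2.1 j, ω.2.2.2.1 j, ω.2.2.2.2.1 j, ω.2.2.2.2.2.1 j,
   ω.2.2.2.2.2.2.1 j, ω.2.2.2.2.2.2.2.1 j, ω.2.2.2.2.2.2.2.2.1 j, ω.2.2.2.2.2.2.2.2.2 j)

/-- Update all coordinates of a trajectory at time index `j`. -/
def updT (ω : Traj M) (j : Fin M.T)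
    (st : M.X0 × M.X1 × M.X2 × Bool × Bool × Option (M.X1 × M.X2) × M.Y × M.U1 × M.U2 × M.Ua) :
    Traj M :=
  (Function.update ω.1 j st.1, Function.update ω.2.1 j st.2.1,
   Function.update ω.2.2.1 j st.2.2.1, Function.update ω.2.2.2.1 j st.2.2.2.1,
   Function.update ω.2.2.2.2.1 j st.2.2.2.2.1, Function.update ω.2.2.2.2.2.1 j st.2.2.2.2.2.1,
   Function.update ω.2.2.2.2.2.2.1 j st.2.2.2.2.2.2.1,
   Function.update ω.2.2.2.2.2.2.2.1 j st.2.2.2.2.2.2.2.1,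
   Function.update ω.2.2.2.2.2.2.2.2.1 j st.2.2.2.2.2.2.2.2.1,
   Function.update ω.2.2.2.2.2.2.2.2.2 j st.2.2.2.2.2.2.2.2.2)

lemma tupleAt_updT_self (ω : Traj M) (j : Fin M.T) (st) :
    tupleAt (updT ω j st) j = st := by
  simp [tupleAt, updT]

lemma tupleAt_updT_ne (ω : Traj M) {j i : Fin M.T} (h : i ≠ j) (st) :
    tupleAt (updT ω j st) i = tupleAt ω i := by
  simp [tupleAt, updT, Function.update_of_ne h]

/-- Two trajectories agree on all coordinates at all times `≤ n`. -/
def agreeN (n : ℕ) (ω ω' : Traj M) : Prop :=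
  ∀ j : Fin M.T, (j : ℕ) ≤ n → tupleAt ω j = tupleAt ω' j

lemma agreeN_refl (n : ℕ) (ω : Traj M) : agreeN n ω ω := fun _ _ => rfl

lemma agreeN_symm {n : ℕ} {ω ω' : Traj M} (h : agreeN n ω ω') : agreeN n ω' ω :=
  fun j hj => (h j hj).symm

lemma agreeN_acc {n : ℕ} {ω ω' : Traj M} (h : agreeN n ω ω') {s : ℕ}
    (hs : s ≤ n) (hsT : s < M.T) :
    X0v ω s = X0v ω' s ∧ X1v ω s = X1v ω' s ∧ X2v ω s = X2v ω' s ∧ M1v ω s = M1v ω' s ∧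
    M2v ω s = M2v ω' s ∧ Zv ω s = Zv ω' s ∧ Yv ω s = Yv ω' s ∧ U1v ω s = U1v ω' s ∧
    U2v ω s = U2v ω' s ∧ UAv ω s = UAv ω' s := by
  have hj : ((idx M s : Fin M.T) : ℕ) ≤ n := by rw [idx_lt hsT]; exact hs
  have := h (idx M s) hj
  simp only [tupleAt, Prod.mk.injEq] at this
  exact ⟨this.1, this.2.1, this.2.2.1, this.2.2.2.1, this.2.2.2.2.1, this.2.2.2.2.2.1,
    this.2.2.2.2.2.2.1, this.2.2.2.2.2.2.2.1, this.2.2.2.2.2.2.2.2.1, this.2.2.2.2.2.2.2.2.2⟩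

end Lemma1Proof

section Lemma1Proof2

variable {M : Model} (IS : InfoStructure M)

/-- The product of all kernels applied at decision stage `s`. -/
noncomputable def Gfull (σ : TeamStrategy M) (γ : AdvStrategy M IS.C) (s : ℕ) (ω : Traj M) : ℝ :=
  σ.f1 s (info1 s ω) (M1v ω s) * σ.f2 s (info2 s ω) (M2v ω s) *
  zKer M (X0v ω s) (Mv ω s) (X1v ω s, X2v ω s) (Zv ω s) *
  M.obs (Zv ω s) (Mv ω s) (X0v ω s) (Yv ω s) *
  σ.g1 s (info1p s ω) (U1v ω s) * σ.g2 s (info2p s ω) (U2v ω s) *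
  γ.ga s (IS.infoCp s ω) (UAv ω s)

/-- The product of the three transition kernels from stage `s` to `s+1`. -/
noncomputable def Hfac (s : ℕ) (ω : Traj M) : ℝ :=
  M.trans0 (X0v ω s) (UAv ω s) (X0v ω (s+1)) *
  M.trans1 (X0v ω s) (X1v ω s) (U1v ω s) (X1v ω (s+1)) *
  M.trans2 (X0v ω s) (X2v ω s) (U2v ω s) (X2v ω (s+1))

/-- The "partial" trajectory weight containing all factors up to stage `n`. -/
noncomputable def Rlev (σ : TeamStrategy M) (γ : AdvStrategy M IS.C) (n : ℕ) (ω : Traj M) : ℝ :=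
  M.init0 (X0v ω 0) * M.init1 (X1v ω 0) * M.init2 (X2v ω 0) *
  (∏ s ∈ Finset.range (n+1), Gfull IS σ γ s ω) * (∏ s ∈ Finset.range n, Hfac s ω)

lemma prob_eq_Rlev (σ : TeamStrategy M) (γ : AdvStrategy M IS.C) (ω : Traj M) :
    prob σ γ IS.infoCp ω = Rlev IS σ γ (M.T - 1) ω := by
  have h : M.T - 1 + 1 = M.T := Nat.succ_pred_eq_of_pos M.hT
  rw [Rlev, h]; rfl

lemma info_congr {n : ℕ} (hn : n < M.T) {ω ω' : Traj M} (h : agreeN n ω ω')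
    {s : ℕ} (hs : s ≤ n) :
    info1 s ω = info1 s ω' ∧ info2 s ω = info2 s ω' ∧ info1p s ω = info1p s ω' ∧
    info2p s ω = info2p s ω' ∧ teamComP s ω = teamComP s ω' := by
  have acc : ∀ i < s + 1,
      X0v ω i = X0v ω' i ∧ X1v ω i = X1v ω' i ∧ X2v ω i = X2v ω' i ∧ M1v ω i = M1v ω' i ∧
      M2v ω i = M2v ω' i ∧ Zv ω i = Zv ω' i ∧ Yv ω i = Yv ω' i ∧ U1v ω i = U1v ω' i ∧
      U2v ω i = U2v ω' i ∧ UAv ω i = UAv ω' i :=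
    fun i hi => agreeN_acc h (by omega) (by omega)
  have eX0 : pre (s+1) (X0v ω) = pre (s+1) (X0v ω') := pre_congr fun i hi => (acc i hi).1
  have eX1 : pre (s+1) (X1v ω) = pre (s+1) (X1v ω') := pre_congr fun i hi => (acc i hi).2.1
  have eX2 : pre (s+1) (X2v ω) = pre (s+1) (X2v ω') := pre_congr fun i hi => (acc i hi).2.2.1
  have eMp : pre (s+1) (Mv ω) = pre (s+1) (Mv ω') := pre_congr fun i hi => by
    unfold Mv; rw [(acc i hi).2.2.2.1, (acc i hi).2.2.2.2.1]
  have eM : pre s (Mv ω) = pre s (Mv ω') := pre_congr fun i hi => by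
    unfold Mv; rw [(acc i (by omega)).2.2.2.1, (acc i (by omega)).2.2.2.2.1]
  have eZp : pre (s+1) (Zv ω) = pre (s+1) (Zv ω') := pre_congr fun i hi => (acc i hi).2.2.2.2.2.1
  have eZ : pre s (Zv ω) = pre s (Zv ω') := pre_congr fun i hi => (acc i (by omega)).2.2.2.2.2.1
  have eYp : pre (s+1) (Yv ω) = pre (s+1) (Yv ω') :=
    pre_congr fun i hi => (acc i hi).2.2.2.2.2.2.1
  have eY : pre s (Yv ω) = pre s (Yv ω') :=
    pre_congr fun i hi => (acc i (by omega)).2.2.2.2.2.2.1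
  have eU1 : pre s (U1v ω) = pre s (U1v ω') :=
    pre_congr fun i hi => (acc i (by omega)).2.2.2.2.2.2.2.1
  have eU2 : pre s (U2v ω) = pre s (U2v ω') :=
    pre_congr fun i hi => (acc i (by omega)).2.2.2.2.2.2.2.2.1
  have eUA : pre s (UAv ω) = pre s (UAv ω') :=
    pre_congr fun i hi => (acc i (by omega)).2.2.2.2.2.2.2.2.2
  refine ⟨?_, ?_, ?_, ?_, ?_⟩
  · unfold info1; rw [eX0, eX1, eU1, eM, eZ, eUA, eY]
  · unfold info2; rw [eX0, eX2, eU2, eM, eZ, eUA, eY]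
  · unfold info1p; rw [eX0, eX1, eU1, eMp, eZp, eUA, eYp]
  · unfold info2p; rw [eX0, eX2, eU2, eMp, eZp, eUA, eYp]
  · unfold teamComP; rw [eX0, eMp, eZp, eUA, eYp]

lemma infoCp_congr {n : ℕ} (hn : n < M.T) {ω ω' : Traj M} (h : agreeN n ω ω')
    {s : ℕ} (hs : s ≤ n) : IS.infoCp s ω = IS.infoCp s ω' :=
  ((IS.cdp_team s ω ω').mpr (info_congr hn h hs).2.2.2.2).1

lemma Gfull_congr (σ : TeamStrategy M) (γ : AdvStrategy M IS.C) {n : ℕ} (hn : n < M.T)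
    {ω ω' : Traj M} (h : agreeN n ω ω') {s : ℕ} (hs : s ≤ n) :
    Gfull IS σ γ s ω = Gfull IS σ γ s ω' := by
  obtain ⟨i1, i2, i1p, i2p, _⟩ := info_congr hn h hs
  obtain ⟨a0, a1, a2, am1, am2, az, ay, au1, au2, aua⟩ := agreeN_acc h hs (by omega)
  have eMv : Mv ω s = Mv ω' s := by unfold Mv; rw [am1, am2]
  unfold Gfull
  rw [i1, i2, i1p, i2p, a0, a1, a2, am1, am2, az, ay, au1, au2, aua, eMv,
    infoCp_congr IS hn h hs]

lemma Hfac_congr {n : ℕ} (hn : n < M.T) {ω ω' : Traj M} (h : agreeN n ω ω')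
    {s : ℕ} (hs : s + 1 ≤ n) : Hfac s ω = Hfac s ω' := by
  obtain ⟨a0, a1, a2, _, _, _, _, au1, au2, aua⟩ := agreeN_acc h (show s ≤ n by omega) (by omega)
  obtain ⟨b0, b1, b2, _, _, _, _, _, _, _⟩ := agreeN_acc h hs (by omega)
  unfold Hfac
  rw [a0, a1, a2, au1, au2, aua, b0, b1, b2]

lemma Rlev_congr (σ : TeamStrategy M) (γ : AdvStrategy M IS.C) {n : ℕ} (hn : n < M.T)
    {ω ω' : Traj M} (h : agreeN n ω ω') : Rlev IS σ γ n ω = Rlev IS σ γ n ω' := by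
  obtain ⟨a0, a1, a2, _⟩ := agreeN_acc h (Nat.zero_le n) (by omega)
  unfold Rlev
  rw [a0, a1, a2]
  rw [Finset.prod_congr rfl fun s hsmem =>
      Gfull_congr IS σ γ hn h (by have := Finset.mem_range.mp hsmem; omega),
    Finset.prod_congr rfl fun s hsmem =>
      Hfac_congr hn h (by have := Finset.mem_range.mp hsmem; omega)]

end Lemma1Proof2

section Lemma1Proof3

variable {M : Model}

/-- Common-information part of the erasure-channel kernel. -/
noncomputable def k0 (M : Model) (x0 : M.X0) (m : Bool × Bool) (z : Option (M.X1 × M.X2)) : ℝ :=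
  if m = (false, false) then (if z = none then 1 else 0)
  else match z with | none => M.pe x0 | some _ => 1 - M.pe x0

/-- Agent-1 part of the erasure-channel kernel. -/
noncomputable def k1 (a : M.X1) (m : Bool × Bool) (z : Option (M.X1 × M.X2)) : ℝ :=
  if m = (false, false) then 1
  else match z with | none => 1 | some x' => if x'.1 = a then 1 else 0

/-- Agent-2 part of the erasure-channel kernel. -/
noncomputable def k2 (b : M.X2) (m : Bool × Bool) (z : Option (M.X1 × M.X2)) : ℝ :=
  if m = (false, false) then 1
  else match z with | none => 1 | some x' => if x'.2 = b then 1 else 0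

lemma zKer_split (x0 : M.X0) (m : Bool × Bool) (a : M.X1) (b : M.X2)
    (z : Option (M.X1 × M.X2)) :
    zKer M x0 m (a, b) z = k0 M x0 m z * k1 a m z * k2 b m z := by
  unfold zKer k0 k1 k2
  by_cases hm : m = (false, false)
  · simp [hm]
  · simp only [if_neg hm]
    cases z with
    | none => simp
    | some x' =>
      by_cases h1 : x'.1 = a <;> by_cases h2 : x'.2 = b <;>
        simp [h1, h2, Prod.ext_iff]

lemma zKer_sum (x0 : M.X0) (m : Bool × Bool) (x : M.X1 × M.X2) :
    ∑ z : Option (M.X1 × M.X2), zKer M x0 m x z = 1 := by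
  rw [Fintype.sum_option]
  unfold zKer
  by_cases hm : m = (false, false)
  · simp [hm]
  · simp only [if_neg hm]
    rw [Finset.sum_ite_eq' Finset.univ x (fun _ => 1 - M.pe x0)]
    simp
end Lemma1Proof3

section Lemma1Proof4

variable {M : Model} (IS : InfoStructure M)

set_option maxHeartbeats 8000000 in
lemma step_sum (σ : TeamStrategy M) (γ : AdvStrategy M IS.C) {n : ℕ} (hn : n + 1 < M.T)
    (ω : Traj M) :
    ∑ st : M.X0 × M.X1 × M.X2 × Bool × Bool × Option (M.X1 × M.X2) × M.Y × M.U1 × M.U2 × M.Ua,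
      Gfull IS σ γ (n+1) (updT ω (idx M (n+1)) st) * Hfac n (updT ω (idx M (n+1)) st) = 1 := by
  classical
  set j : Fin M.T := idx M (n+1) with hj
  let x1c : M.X1 := Classical.arbitrary _
  let x2c : M.X2 := Classical.arbitrary _
  let u1c : M.U1 := Classical.arbitrary _
  let u2c : M.U2 := Classical.arbitrary _
  let uac : M.Ua := Classical.arbitrary _
  let ACP : M.X0 → Bool → Bool → Option (M.X1 × M.X2) → M.Y → IS.C :=
    fun x0 m1 m2 z y => IS.infoCp (n+1) (updT ω j (x0, x1c, x2c, m1, m2, z, y, u1c, u2c, uac))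
  have hne : ∀ st (s : ℕ), s < M.T → s ≠ n+1 →
      tupleAt (updT ω j st) (idx M s) = tupleAt ω (idx M s) := by
    intro st s hs hsne
    refine tupleAt_updT_ne ω ?_ st
    rw [hj, idx_lt hs, idx_lt hn]
    simp only [ne_eq, Fin.mk.injEq]
    exact hsne
  have hself : ∀ st, tupleAt (updT ω j st) j = st := fun st => tupleAt_updT_self ω j st
  -- accessor equalities below time n+1
  have acc : ∀ st (s : ℕ), s < n + 1 →
      X0v (updT ω j st) s = X0v ω s ∧ X1v (updT ω j st) s = X1v ω s ∧
      X2v (updT ω j st) s = X2v ω s ∧ Mv (updT ω j st) s = Mv ω s ∧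
      Zv (updT ω j st) s = Zv ω s ∧ Yv (updT ω j st) s = Yv ω s ∧
      U1v (updT ω j st) s = U1v ω s ∧ U2v (updT ω j st) s = U2v ω s ∧
      UAv (updT ω j st) s = UAv ω s := by
    intro st s hs
    have h := hne st s (by omega) (by omega)
    exact ⟨congrArg (fun p => p.1) h, congrArg (fun p => p.2.1) h,
      congrArg (fun p => p.2.2.1) h, congrArg (fun p => (p.2.2.2.1, p.2.2.2.2.1)) h,
      congrArg (fun p => p.2.2.2.2.2.1) h, congrArg (fun p => p.2.2.2.2.2.2.1) h,
      congrArg (fun p => p.2.2.2.2.2.2.2.1) h, congrArg (fun p => p.2.2.2.2.2.2.2.2.1) h,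
      congrArg (fun p => p.2.2.2.2.2.2.2.2.2) h⟩
  -- prefix lists of length ≤ n+1 are unchanged
  have p0 : ∀ st, pre (n+1) (X0v (updT ω j st)) = pre (n+1) (X0v ω) :=
    fun st => pre_congr fun i hi => (acc st i hi).1
  have p1 : ∀ st, pre (n+1) (X1v (updT ω j st)) = pre (n+1) (X1v ω) :=
    fun st => pre_congr fun i hi => (acc st i hi).2.1
  have p2 : ∀ st, pre (n+1) (X2v (updT ω j st)) = pre (n+1) (X2v ω) :=
    fun st => pre_congr fun i hi => (acc st i hi).2.2.1
  have pM : ∀ st, pre (n+1) (Mv (updT ω j st)) = pre (n+1) (Mv ω) :=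
    fun st => pre_congr fun i hi => (acc st i hi).2.2.2.1
  have pZ : ∀ st, pre (n+1) (Zv (updT ω j st)) = pre (n+1) (Zv ω) :=
    fun st => pre_congr fun i hi => (acc st i hi).2.2.2.2.1
  have pY : ∀ st, pre (n+1) (Yv (updT ω j st)) = pre (n+1) (Yv ω) :=
    fun st => pre_congr fun i hi => (acc st i hi).2.2.2.2.2.1
  have pU1 : ∀ st, pre (n+1) (U1v (updT ω j st)) = pre (n+1) (U1v ω) :=
    fun st => pre_congr fun i hi => (acc st i hi).2.2.2.2.2.2.1
  have pU2 : ∀ st, pre (n+1) (U2v (updT ω j st)) = pre (n+1) (U2v ω) :=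
    fun st => pre_congr fun i hi => (acc st i hi).2.2.2.2.2.2.2.1
  have pUA : ∀ st, pre (n+1) (UAv (updT ω j st)) = pre (n+1) (UAv ω) :=
    fun st => pre_congr fun i hi => (acc st i hi).2.2.2.2.2.2.2.2
  -- accessors at time n+1
  have b0 : ∀ x0 x1 x2 m1 m2 z y u1 u2 ua,
      X0v (updT ω j (x0,x1,x2,m1,m2,z,y,u1,u2,ua)) (n+1) = x0 :=
    fun x0 x1 x2 m1 m2 z y u1 u2 ua =>
      congrArg (fun p => p.1) (hself (x0,x1,x2,m1,m2,z,y,u1,u2,ua))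
  have b1 : ∀ x0 x1 x2 m1 m2 z y u1 u2 ua,
      X1v (updT ω j (x0,x1,x2,m1,m2,z,y,u1,u2,ua)) (n+1) = x1 :=
    fun x0 x1 x2 m1 m2 z y u1 u2 ua =>
      congrArg (fun p => p.2.1) (hself (x0,x1,x2,m1,m2,z,y,u1,u2,ua))
  have b2 : ∀ x0 x1 x2 m1 m2 z y u1 u2 ua,
      X2v (updT ω j (x0,x1,x2,m1,m2,z,y,u1,u2,ua)) (n+1) = x2 :=
    fun x0 x1 x2 m1 m2 z y u1 u2 ua =>
      congrArg (fun p => p.2.2.1) (hself (x0,x1,x2,m1,m2,z,y,u1,u2,ua))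
  have bM1 : ∀ x0 x1 x2 m1 m2 z y u1 u2 ua,
      M1v (updT ω j (x0,x1,x2,m1,m2,z,y,u1,u2,ua)) (n+1) = m1 :=
    fun x0 x1 x2 m1 m2 z y u1 u2 ua =>
      congrArg (fun p => p.2.2.2.1) (hself (x0,x1,x2,m1,m2,z,y,u1,u2,ua))
  have bM2 : ∀ x0 x1 x2 m1 m2 z y u1 u2 ua,
      M2v (updT ω j (x0,x1,x2,m1,m2,z,y,u1,u2,ua)) (n+1) = m2 :=
    fun x0 x1 x2 m1 m2 z y u1 u2 ua =>
      congrArg (fun p => p.2.2.2.2.1) (hself (x0,x1,x2,m1,m2,z,y,u1,u2,ua))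
  have bM : ∀ x0 x1 x2 m1 m2 z y u1 u2 ua,
      Mv (updT ω j (x0,x1,x2,m1,m2,z,y,u1,u2,ua)) (n+1) = (m1, m2) :=
    fun x0 x1 x2 m1 m2 z y u1 u2 ua =>
      congrArg (fun p => (p.2.2.2.1, p.2.2.2.2.1)) (hself (x0,x1,x2,m1,m2,z,y,u1,u2,ua))
  have bZ : ∀ x0 x1 x2 m1 m2 z y u1 u2 ua,
      Zv (updT ω j (x0,x1,x2,m1,m2,z,y,u1,u2,ua)) (n+1) = z :=
    fun x0 x1 x2 m1 m2 z y u1 u2 ua =>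
      congrArg (fun p => p.2.2.2.2.2.1) (hself (x0,x1,x2,m1,m2,z,y,u1,u2,ua))
  have bY : ∀ x0 x1 x2 m1 m2 z y u1 u2 ua,
      Yv (updT ω j (x0,x1,x2,m1,m2,z,y,u1,u2,ua)) (n+1) = y :=
    fun x0 x1 x2 m1 m2 z y u1 u2 ua =>
      congrArg (fun p => p.2.2.2.2.2.2.1) (hself (x0,x1,x2,m1,m2,z,y,u1,u2,ua))
  have bU1 : ∀ x0 x1 x2 m1 m2 z y u1 u2 ua,
      U1v (updT ω j (x0,x1,x2,m1,m2,z,y,u1,u2,ua)) (n+1) = u1 :=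
    fun x0 x1 x2 m1 m2 z y u1 u2 ua =>
      congrArg (fun p => p.2.2.2.2.2.2.2.1) (hself (x0,x1,x2,m1,m2,z,y,u1,u2,ua))
  have bU2 : ∀ x0 x1 x2 m1 m2 z y u1 u2 ua,
      U2v (updT ω j (x0,x1,x2,m1,m2,z,y,u1,u2,ua)) (n+1) = u2 :=
    fun x0 x1 x2 m1 m2 z y u1 u2 ua =>
      congrArg (fun p => p.2.2.2.2.2.2.2.2.1) (hself (x0,x1,x2,m1,m2,z,y,u1,u2,ua))
  have bUA : ∀ x0 x1 x2 m1 m2 z y u1 u2 ua,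
      UAv (updT ω j (x0,x1,x2,m1,m2,z,y,u1,u2,ua)) (n+1) = ua :=
    fun x0 x1 x2 m1 m2 z y u1 u2 ua =>
      congrArg (fun p => p.2.2.2.2.2.2.2.2.2) (hself (x0,x1,x2,m1,m2,z,y,u1,u2,ua))
  -- prefix lists of length n+2
  have q0 : ∀ x0 x1 x2 m1 m2 z y u1 u2 ua,
      pre (n+1+1) (X0v (updT ω j (x0,x1,x2,m1,m2,z,y,u1,u2,ua))) =
        pre (n+1) (X0v ω) ++ [x0] := by
    intro x0 x1 x2 m1 m2 z y u1 u2 ua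
    rw [pre_succ, p0, b0]
  have q1 : ∀ x0 x1 x2 m1 m2 z y u1 u2 ua,
      pre (n+1+1) (X1v (updT ω j (x0,x1,x2,m1,m2,z,y,u1,u2,ua))) =
        pre (n+1) (X1v ω) ++ [x1] := by
    intro x0 x1 x2 m1 m2 z y u1 u2 ua
    rw [pre_succ, p1, b1]
  have q2 : ∀ x0 x1 x2 m1 m2 z y u1 u2 ua,
      pre (n+1+1) (X2v (updT ω j (x0,x1,x2,m1,m2,z,y,u1,u2,ua))) =
        pre (n+1) (X2v ω) ++ [x2] := by
    intro x0 x1 x2 m1 m2 z y u1 u2 ua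
    rw [pre_succ, p2, b2]
  have qM : ∀ x0 x1 x2 m1 m2 z y u1 u2 ua,
      pre (n+1+1) (Mv (updT ω j (x0,x1,x2,m1,m2,z,y,u1,u2,ua))) =
        pre (n+1) (Mv ω) ++ [(m1, m2)] := by
    intro x0 x1 x2 m1 m2 z y u1 u2 ua
    rw [pre_succ, pM, bM]
  have qZ : ∀ x0 x1 x2 m1 m2 z y u1 u2 ua,
      pre (n+1+1) (Zv (updT ω j (x0,x1,x2,m1,m2,z,y,u1,u2,ua))) =
        pre (n+1) (Zv ω) ++ [z] := by
    intro x0 x1 x2 m1 m2 z y u1 u2 ua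
    rw [pre_succ, pZ, bZ]
  have qY : ∀ x0 x1 x2 m1 m2 z y u1 u2 ua,
      pre (n+1+1) (Yv (updT ω j (x0,x1,x2,m1,m2,z,y,u1,u2,ua))) =
        pre (n+1) (Yv ω) ++ [y] := by
    intro x0 x1 x2 m1 m2 z y u1 u2 ua
    rw [pre_succ, pY, bY]
  -- closed forms of the information vectors at stage n+1
  have i1 : ∀ x0 x1 x2 m1 m2 z y u1 u2 ua,
      info1 (n+1) (updT ω j (x0,x1,x2,m1,m2,z,y,u1,u2,ua)) =
        (pre (n+1) (X0v ω) ++ [x0], pre (n+1) (X1v ω) ++ [x1], pre (n+1) (U1v ω),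
         pre (n+1) (Mv ω), pre (n+1) (Zv ω), pre (n+1) (UAv ω), pre (n+1) (Yv ω)) := by
    intro x0 x1 x2 m1 m2 z y u1 u2 ua
    unfold info1
    rw [q0, q1, pU1, pM, pZ, pUA, pY]
  have i2 : ∀ x0 x1 x2 m1 m2 z y u1 u2 ua,
      info2 (n+1) (updT ω j (x0,x1,x2,m1,m2,z,y,u1,u2,ua)) =
        (pre (n+1) (X0v ω) ++ [x0], pre (n+1) (X2v ω) ++ [x2], pre (n+1) (U2v ω),
         pre (n+1) (Mv ω), pre (n+1) (Zv ω), pre (n+1) (UAv ω), pre (n+1) (Yv ω)) := by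
    intro x0 x1 x2 m1 m2 z y u1 u2 ua
    unfold info2
    rw [q0, q2, pU2, pM, pZ, pUA, pY]
  have i1p : ∀ x0 x1 x2 m1 m2 z y u1 u2 ua,
      info1p (n+1) (updT ω j (x0,x1,x2,m1,m2,z,y,u1,u2,ua)) =
        (pre (n+1) (X0v ω) ++ [x0], pre (n+1) (X1v ω) ++ [x1], pre (n+1) (U1v ω),
         pre (n+1) (Mv ω) ++ [(m1, m2)], pre (n+1) (Zv ω) ++ [z], pre (n+1) (UAv ω),
         pre (n+1) (Yv ω) ++ [y]) := by
    intro x0 x1 x2 m1 m2 z y u1 u2 ua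
    unfold info1p
    rw [q0, q1, pU1, qM, qZ, pUA, qY]
  have i2p : ∀ x0 x1 x2 m1 m2 z y u1 u2 ua,
      info2p (n+1) (updT ω j (x0,x1,x2,m1,m2,z,y,u1,u2,ua)) =
        (pre (n+1) (X0v ω) ++ [x0], pre (n+1) (X2v ω) ++ [x2], pre (n+1) (U2v ω),
         pre (n+1) (Mv ω) ++ [(m1, m2)], pre (n+1) (Zv ω) ++ [z], pre (n+1) (UAv ω),
         pre (n+1) (Yv ω) ++ [y]) := by
    intro x0 x1 x2 m1 m2 z y u1 u2 ua
    unfold info2p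
    rw [q0, q2, pU2, qM, qZ, pUA, qY]
  have tcp : ∀ x0 x1 x2 m1 m2 z y u1 u2 ua,
      teamComP (n+1) (updT ω j (x0,x1,x2,m1,m2,z,y,u1,u2,ua)) =
        (pre (n+1) (X0v ω) ++ [x0], pre (n+1) (Mv ω) ++ [(m1, m2)],
         pre (n+1) (Zv ω) ++ [z], pre (n+1) (UAv ω), pre (n+1) (Yv ω) ++ [y]) := by
    intro x0 x1 x2 m1 m2 z y u1 u2 ua
    unfold teamComP
    rw [q0, qM, qZ, pUA, qY]
  have hacp : ∀ x0 x1 x2 m1 m2 z y u1 u2 ua,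
      IS.infoCp (n+1) (updT ω j (x0,x1,x2,m1,m2,z,y,u1,u2,ua)) = ACP x0 m1 m2 z y := by
    intro x0 x1 x2 m1 m2 z y u1 u2 ua
    refine ((IS.cdp_team (n+1) _ _).mpr ?_).1
    rw [tcp, tcp]
  have key : ∀ x0 x1 x2 m1 m2 z y u1 u2 ua,
      Gfull IS σ γ (n+1) (updT ω j (x0,x1,x2,m1,m2,z,y,u1,u2,ua)) *
        Hfac n (updT ω j (x0,x1,x2,m1,m2,z,y,u1,u2,ua)) =
      M.trans0 (X0v ω n) (UAv ω n) x0 *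
      (M.trans1 (X0v ω n) (X1v ω n) (U1v ω n) x1 *
      (M.trans2 (X0v ω n) (X2v ω n) (U2v ω n) x2 *
      (σ.f1 (n+1) (pre (n+1) (X0v ω) ++ [x0], pre (n+1) (X1v ω) ++ [x1], pre (n+1) (U1v ω),
          pre (n+1) (Mv ω), pre (n+1) (Zv ω), pre (n+1) (UAv ω), pre (n+1) (Yv ω)) m1 *
      (σ.f2 (n+1) (pre (n+1) (X0v ω) ++ [x0], pre (n+1) (X2v ω) ++ [x2], pre (n+1) (U2v ω),
          pre (n+1) (Mv ω), pre (n+1) (Zv ω), pre (n+1) (UAv ω), pre (n+1) (Yv ω)) m2 *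
      (zKer M x0 (m1, m2) (x1, x2) z *
      (M.obs z (m1, m2) x0 y *
      (σ.g1 (n+1) (pre (n+1) (X0v ω) ++ [x0], pre (n+1) (X1v ω) ++ [x1], pre (n+1) (U1v ω),
          pre (n+1) (Mv ω) ++ [(m1, m2)], pre (n+1) (Zv ω) ++ [z], pre (n+1) (UAv ω),
          pre (n+1) (Yv ω) ++ [y]) u1 *
      (σ.g2 (n+1) (pre (n+1) (X0v ω) ++ [x0], pre (n+1) (X2v ω) ++ [x2], pre (n+1) (U2v ω),
          pre (n+1) (Mv ω) ++ [(m1, m2)], pre (n+1) (Zv ω) ++ [z], pre (n+1) (UAv ω),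
          pre (n+1) (Yv ω) ++ [y]) u2 *
      γ.ga (n+1) (ACP x0 m1 m2 z y) ua)))))))) := by
    intro x0 x1 x2 m1 m2 z y u1 u2 ua
    unfold Gfull Hfac
    rw [i1, i2, i1p, i2p, hacp, b0, b1, b2, bM1, bM2, bM, bZ, bY, bU1, bU2, bUA]
    rw [(acc _ n (by omega)).1, (acc _ n (by omega)).2.1, (acc _ n (by omega)).2.2.1,
      (acc _ n (by omega)).2.2.2.2.2.2.1, (acc _ n (by omega)).2.2.2.2.2.2.2.1,
      (acc _ n (by omega)).2.2.2.2.2.2.2.2]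
    ring
  simp only [Fintype.sum_prod_type]
  simp only [key]
  simp only [← Finset.mul_sum, γ.ga_sum, mul_one, σ.g2_sum, σ.g1_sum, M.obs_sum, zKer_sum,
    σ.f2_sum, σ.f1_sum, M.trans2_sum, M.trans1_sum, M.trans0_sum]

end Lemma1Proof4

section Lemma1Proof5

variable {M : Model} (IS : InfoStructure M)

lemma partition_sum {n : ℕ} (hn : n + 1 < M.T) (ω : Traj M) (X : Traj M → ℝ) :
    ∑ ω' : Traj M, (if agreeN n ω ω' then X ω' else 0)
      = ∑ st : M.X0 × M.X1 × M.X2 × Bool × Bool × Option (M.X1 × M.X2) × M.Y × M.U1 × M.U2 ×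
          M.Ua, ∑ ω' : Traj M,
          (if agreeN (n+1) (updT ω (idx M (n+1)) st) ω' then X ω' else 0) := by
  classical
  set j : Fin M.T := idx M (n+1) with hj
  have hjv : (j : ℕ) = n + 1 := by rw [hj, idx_lt hn]
  have hiff : ∀ st ω', agreeN (n+1) (updT ω j st) ω' ↔
      (agreeN n ω ω' ∧ tupleAt ω' j = st) := by
    intro st ω'
    constructor
    · intro h
      constructor
      · intro i hi
        have hij : i ≠ j := by
          intro hh; rw [hh, hjv] at hi; omega
        have h1 := h i (by omega)
        rw [tupleAt_updT_ne ω hij st] at h1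
        exact h1
      · have h2 := h j (by omega)
        rw [tupleAt_updT_self ω j st] at h2
        exact h2.symm
    · rintro ⟨h1, h2⟩ i hi
      by_cases hij : i = j
      · rw [hij, tupleAt_updT_self ω j st]
        exact h2.symm
      · have hin : (i : ℕ) ≤ n := by
          have : (i : ℕ) ≠ n + 1 := by
            intro hh
            apply hij
            apply Fin.ext
            rw [hh, hjv]
          omega
        rw [tupleAt_updT_ne ω hij st]
        exact h1 i hin
  calc ∑ ω' : Traj M, (if agreeN n ω ω' then X ω' else 0)
      = ∑ ω' : Traj M, ∑ st, (if tupleAt ω' j = st then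
          (if agreeN n ω ω' then X ω' else 0) else 0) := by
        refine Finset.sum_congr rfl fun ω' _ => ?_
        rw [Finset.sum_ite_eq Finset.univ (tupleAt ω' j)
          (fun _ => if agreeN n ω ω' then X ω' else 0)]
        simp
    _ = ∑ st, ∑ ω' : Traj M, (if tupleAt ω' j = st then
          (if agreeN n ω ω' then X ω' else 0) else 0) := Finset.sum_comm
    _ = ∑ st, ∑ ω' : Traj M, (if agreeN (n+1) (updT ω j st) ω' then X ω' else 0) := by
        refine Finset.sum_congr rfl fun st _ => Finset.sum_congr rfl fun ω' _ => ?_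
        by_cases h1 : tupleAt ω' j = st <;> by_cases h2 : agreeN n ω ω' <;>
          simp [h1, h2, hiff st ω']

lemma agreeN_top {ω ω' : Traj M} (h : agreeN (M.T - 1) ω ω') : ω = ω' := by
  obtain ⟨a1,a2,a3,a4,a5,a6,a7,a8,a9,a10⟩ := ω
  obtain ⟨b1,b2,b3,b4,b5,b6,b7,b8,b9,b10⟩ := ω'
  have hh : ∀ i : Fin M.T,
      (a1 i, a2 i, a3 i, a4 i, a5 i, a6 i, a7 i, a8 i, a9 i, a10 i) =
      (b1 i, b2 i, b3 i, b4 i, b5 i, b6 i, b7 i, b8 i, b9 i, b10 i) :=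
    fun i => h i (by have := i.isLt; omega)
  simp only [Prod.mk.injEq] at hh ⊢
  exact ⟨funext fun i => (hh i).1, funext fun i => (hh i).2.1, funext fun i => (hh i).2.2.1,
    funext fun i => (hh i).2.2.2.1, funext fun i => (hh i).2.2.2.2.1,
    funext fun i => (hh i).2.2.2.2.2.1, funext fun i => (hh i).2.2.2.2.2.2.1,
    funext fun i => (hh i).2.2.2.2.2.2.2.1, funext fun i => (hh i).2.2.2.2.2.2.2.2.1,
    funext fun i => (hh i).2.2.2.2.2.2.2.2.2⟩

lemma telescope (σ : TeamStrategy M) (γ : AdvStrategy M IS.C) :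
    ∀ (k n : ℕ), n + k = M.T - 1 → ∀ ω : Traj M,
      ∑ ω' : Traj M, (if agreeN n ω ω' then prob σ γ IS.infoCp ω' else 0)
        = Rlev IS σ γ n ω := by
  intro k
  induction k with
  | zero =>
    intro n hnk ω
    have hn : n = M.T - 1 := by omega
    subst hn
    rw [Finset.sum_eq_single ω]
    · rw [if_pos (agreeN_refl _ _), prob_eq_Rlev]
    · intro ω' _ hne
      rw [if_neg]
      intro hagree
      exact hne (agreeN_top hagree).symm
    · intro h; exact absurd (Finset.mem_univ ω) h
  | succ k ih =>
    intro n hnk ω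
    have hn1 : n + 1 < M.T := by omega
    have hRsucc : ∀ ω₂ : Traj M, Rlev IS σ γ (n+1) ω₂ =
        Rlev IS σ γ n ω₂ * (Gfull IS σ γ (n+1) ω₂ * Hfac n ω₂) := by
      intro ω₂
      unfold Rlev
      rw [Finset.prod_range_succ (fun s => Gfull IS σ γ s ω₂),
        Finset.prod_range_succ (fun s => Hfac s ω₂)]
      ring
    rw [partition_sum hn1 ω (prob σ γ IS.infoCp)]
    calc ∑ st, ∑ ω' : Traj M,
          (if agreeN (n+1) (updT ω (idx M (n+1)) st) ω' then prob σ γ IS.infoCp ω' else 0)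
        = ∑ st, Rlev IS σ γ (n+1) (updT ω (idx M (n+1)) st) :=
          Finset.sum_congr rfl fun st _ => ih (n+1) (by omega) _
      _ = ∑ st, Rlev IS σ γ n ω *
            (Gfull IS σ γ (n+1) (updT ω (idx M (n+1)) st) *
             Hfac n (updT ω (idx M (n+1)) st)) := by
          refine Finset.sum_congr rfl fun st _ => ?_
          rw [hRsucc]
          congr 1
          refine Rlev_congr IS σ γ (by omega) ?_
          intro i hi
          refine tupleAt_updT_ne ω ?_ st
          intro hh
          rw [hh, idx_lt hn1] at hi
          simp only [Fin.val_mk] at hi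
          omega
      _ = Rlev IS σ γ n ω := by
          rw [← Finset.mul_sum, step_sum IS σ γ hn1 ω, mul_one]

end Lemma1Proof5

section Lemma1Proof6

variable {M : Model} (IS : InfoStructure M)

/-- Replace the coordinates of `b` at times `≤ n` by those of `a`. -/
def patchT (n : ℕ) (a b : Traj M) : Traj M :=
  (fun i => if (i:ℕ) ≤ n then a.1 i else b.1 i,
   fun i => if (i:ℕ) ≤ n then a.2.1 i else b.2.1 i,
   fun i => if (i:ℕ) ≤ n then a.2.2.1 i else b.2.2.1 i,
   fun i => if (i:ℕ) ≤ n then a.2.2.2.1 i else b.2.2.2.1 i,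
   fun i => if (i:ℕ) ≤ n then a.2.2.2.2.1 i else b.2.2.2.2.1 i,
   fun i => if (i:ℕ) ≤ n then a.2.2.2.2.2.1 i else b.2.2.2.2.2.1 i,
   fun i => if (i:ℕ) ≤ n then a.2.2.2.2.2.2.1 i else b.2.2.2.2.2.2.1 i,
   fun i => if (i:ℕ) ≤ n then a.2.2.2.2.2.2.2.1 i else b.2.2.2.2.2.2.2.1 i,
   fun i => if (i:ℕ) ≤ n then a.2.2.2.2.2.2.2.2.1 i else b.2.2.2.2.2.2.2.2.1 i,
   fun i => if (i:ℕ) ≤ n then a.2.2.2.2.2.2.2.2.2 i else b.2.2.2.2.2.2.2.2.2 i)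

lemma agree_patch (n : ℕ) (a b : Traj M) : agreeN n a (patchT n a b) := by
  intro i hi
  simp [tupleAt, patchT, hi]

lemma patch_patch {n : ℕ} {a b' : Traj M} (h : agreeN n a b') (b : Traj M) :
    patchT n a (patchT n b b') = b' := by
  obtain ⟨a1,a2,a3,a4,a5,a6,a7,a8,a9,a10⟩ := a
  obtain ⟨c1,c2,c3,c4,c5,c6,c7,c8,c9,c10⟩ := b'
  have hh : ∀ (i : Fin M.T), (i:ℕ) ≤ n →
      (a1 i, a2 i, a3 i, a4 i, a5 i, a6 i, a7 i, a8 i, a9 i, a10 i) =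
      (c1 i, c2 i, c3 i, c4 i, c5 i, c6 i, c7 i, c8 i, c9 i, c10 i) := h
  simp only [patchT, Prod.mk.injEq]
  refine ⟨funext fun i => ?_, funext fun i => ?_, funext fun i => ?_, funext fun i => ?_,
    funext fun i => ?_, funext fun i => ?_, funext fun i => ?_, funext fun i => ?_,
    funext fun i => ?_, funext fun i => ?_⟩ <;>
  · by_cases hi : (i:ℕ) ≤ n
    · simp only [if_pos hi]
      have := hh i hi
      simp only [Prod.mk.injEq] at this
      tauto
    · simp only [if_neg hi]

lemma Nconst (n : ℕ) (ω₁ ω₂ : Traj M) :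
    (∑ ω' : Traj M, if agreeN n ω₁ ω' then (1:ℝ) else 0)
      = ∑ ω' : Traj M, if agreeN n ω₂ ω' then (1:ℝ) else 0 := by
  classical
  rw [← Finset.sum_filter, ← Finset.sum_filter, Finset.sum_const, Finset.sum_const]
  congr 1
  refine Finset.card_bij' (fun ω' _ => patchT n ω₂ ω') (fun ω' _ => patchT n ω₁ ω') ?_ ?_ ?_ ?_
  · intro ω' hω'
    simp only [Finset.mem_filter, Finset.mem_univ, true_and] at hω' ⊢
    exact agree_patch n ω₂ ω'
  · intro ω' hω'
    simp only [Finset.mem_filter, Finset.mem_univ, true_and] at hω' ⊢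
    exact agree_patch n ω₁ ω'
  · intro ω' hω'
    simp only [Finset.mem_filter, Finset.mem_univ, true_and] at hω'
    exact patch_patch hω' ω₂
  · intro ω' hω'
    simp only [Finset.mem_filter, Finset.mem_univ, true_and] at hω'
    exact patch_patch hω' ω₁

lemma Npos (n : ℕ) (ω₀ : Traj M) :
    0 < ∑ ω' : Traj M, (if agreeN n ω₀ ω' then (1:ℝ) else 0) := by
  refine Finset.sum_pos' (fun ω' _ => ?_) ⟨ω₀, Finset.mem_univ _, by simp [agreeN_refl]⟩
  by_cases h : agreeN n ω₀ ω' <;> simp [h]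

lemma grouping (σ : TeamStrategy M) (γ : AdvStrategy M IS.C) {n : ℕ} (hn : n ≤ M.T - 1)
    (Φ : Traj M → Prop) (hΦ : ∀ ω ω', agreeN n ω ω' → (Φ ω ↔ Φ ω')) (ω₀ : Traj M) :
    ∑ ω : Traj M, (if Φ ω then Rlev IS σ γ n ω else 0)
      = (∑ ω' : Traj M, if agreeN n ω₀ ω' then (1:ℝ) else 0) * pr σ γ IS.infoCp Φ := by
  classical
  have htel := telescope IS σ γ (M.T - 1 - n) n (by omega)
  calc ∑ ω : Traj M, (if Φ ω then Rlev IS σ γ n ω else 0)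
      = ∑ ω : Traj M, ∑ ω' : Traj M,
          (if Φ ω then (if agreeN n ω ω' then prob σ γ IS.infoCp ω' else 0) else 0) := by
        refine Finset.sum_congr rfl fun ω _ => ?_
        by_cases hφ : Φ ω
        · rw [if_pos hφ, ← htel ω]
          exact Finset.sum_congr rfl fun ω' _ => by rw [if_pos hφ]
        · simp [hφ]
    _ = ∑ ω' : Traj M, ∑ ω : Traj M,
          (if Φ ω then (if agreeN n ω ω' then prob σ γ IS.infoCp ω' else 0) else 0) :=
        Finset.sum_comm
    _ = ∑ ω' : Traj M, (if Φ ω' then prob σ γ IS.infoCp ω' else 0) *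
          (∑ ω : Traj M, if agreeN n ω' ω then (1:ℝ) else 0) := by
        refine Finset.sum_congr rfl fun ω' _ => ?_
        rw [Finset.mul_sum]
        refine Finset.sum_congr rfl fun ω _ => ?_
        by_cases hag : agreeN n ω ω'
        · have hsym := agreeN_symm hag
          by_cases hφ : Φ ω'
          · rw [if_pos ((hΦ ω ω' hag).mpr hφ), if_pos hag, if_pos hφ, if_pos hsym, mul_one]
          · rw [if_neg (fun hw => hφ ((hΦ ω ω' hag).mp hw)), if_neg hφ, zero_mul]
        · rw [if_neg (fun hs => hag (agreeN_symm hs)), mul_zero]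
          by_cases hφω : Φ ω
          · rw [if_pos hφω, if_neg hag]
          · rw [if_neg hφω]
    _ = ∑ ω' : Traj M, (if Φ ω' then prob σ γ IS.infoCp ω' else 0) *
          (∑ ω : Traj M, if agreeN n ω₀ ω then (1:ℝ) else 0) :=
        Finset.sum_congr rfl fun ω' _ => by rw [Nconst n ω' ω₀]
    _ = (∑ ω' : Traj M, if agreeN n ω₀ ω' then (1:ℝ) else 0) * pr σ γ IS.infoCp Φ := by
        rw [← Finset.sum_mul, mul_comm]
        rfl

end Lemma1Proof6

section Lemma1Proof7

variable {M : Model} (IS : InfoStructure M)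

/-- Agent-1 factor of the partial weight. -/
noncomputable def B1f (σ : TeamStrategy M) (t : ℕ) (ω : Traj M) : ℝ :=
  M.init1 (X1v ω 0) *
  (∏ s ∈ Finset.range (t+1),
    (σ.f1 s (info1 s ω) (M1v ω s) * σ.g1 s (info1p s ω) (U1v ω s) *
     k1 (X1v ω s) (Mv ω s) (Zv ω s))) *
  (∏ s ∈ Finset.range t, M.trans1 (X0v ω s) (X1v ω s) (U1v ω s) (X1v ω (s+1)))

/-- Agent-2 factor of the partial weight. -/
noncomputable def B2f (σ : TeamStrategy M) (t : ℕ) (ω : Traj M) : ℝ :=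
  M.init2 (X2v ω 0) *
  (∏ s ∈ Finset.range (t+1),
    (σ.f2 s (info2 s ω) (M2v ω s) * σ.g2 s (info2p s ω) (U2v ω s) *
     k2 (X2v ω s) (Mv ω s) (Zv ω s))) *
  (∏ s ∈ Finset.range t, M.trans2 (X0v ω s) (X2v ω s) (U2v ω s) (X2v ω (s+1)))

/-- Common factor of the partial weight. -/
noncomputable def Cf (γ : AdvStrategy M IS.C) (t : ℕ) (ω : Traj M) : ℝ :=
  M.init0 (X0v ω 0) *
  (∏ s ∈ Finset.range (t+1),
    (k0 M (X0v ω s) (Mv ω s) (Zv ω s) * M.obs (Zv ω s) (Mv ω s) (X0v ω s) (Yv ω s) *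
     γ.ga s (IS.infoCp s ω) (UAv ω s))) *
  (∏ s ∈ Finset.range t, M.trans0 (X0v ω s) (UAv ω s) (X0v ω (s+1)))

lemma Rsplit (σ : TeamStrategy M) (γ : AdvStrategy M IS.C) (t : ℕ) (ω : Traj M) :
    Rlev IS σ γ t ω = Cf IS γ t ω * B1f σ t ω * B2f σ t ω := by
  have h1 : ∀ s, Gfull IS σ γ s ω =
      (k0 M (X0v ω s) (Mv ω s) (Zv ω s) * M.obs (Zv ω s) (Mv ω s) (X0v ω s) (Yv ω s) *
        γ.ga s (IS.infoCp s ω) (UAv ω s)) *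
      ((σ.f1 s (info1 s ω) (M1v ω s) * σ.g1 s (info1p s ω) (U1v ω s) *
        k1 (X1v ω s) (Mv ω s) (Zv ω s)) *
       (σ.f2 s (info2 s ω) (M2v ω s) * σ.g2 s (info2p s ω) (U2v ω s) *
        k2 (X2v ω s) (Mv ω s) (Zv ω s))) := by
    intro s
    unfold Gfull
    rw [zKer_split]
    ring
  have h2 : ∀ s, Hfac s ω =
      M.trans0 (X0v ω s) (UAv ω s) (X0v ω (s+1)) *
      (M.trans1 (X0v ω s) (X1v ω s) (U1v ω s) (X1v ω (s+1)) *
       M.trans2 (X0v ω s) (X2v ω s) (U2v ω s) (X2v ω (s+1))) := by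
    intro s
    unfold Hfac
    ring
  unfold Rlev Cf B1f B2f
  rw [Finset.prod_congr rfl fun s _ => h1 s, Finset.prod_congr rfl fun s _ => h2 s]
  simp only [Finset.prod_mul_distrib]
  ring

lemma B1f_strat {σ σ' : TeamStrategy M} (hf : σ'.f1 = σ.f1) (hg : σ'.g1 = σ.g1)
    (t : ℕ) (ω : Traj M) : B1f σ' t ω = B1f σ t ω := by
  unfold B1f; rw [hf, hg]

lemma B2f_strat {σ σ' : TeamStrategy M} (hf : σ'.f2 = σ.f2) (hg : σ'.g2 = σ.g2)
    (t : ℕ) (ω : Traj M) : B2f σ' t ω = B2f σ t ω := by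
  unfold B2f; rw [hf, hg]

/-- Swap the agent-1 private coordinates (local states and actions up to time `t`):
take them from `a`, everything else from `b`. -/
def tau1 (t : ℕ) (a b : Traj M) : Traj M :=
  (b.1, fun i => if (i:ℕ) ≤ t then a.2.1 i else b.2.1 i, b.2.2.1, b.2.2.2.1, b.2.2.2.2.1,
   b.2.2.2.2.2.1, b.2.2.2.2.2.2.1,
   fun i => if (i:ℕ) ≤ t then a.2.2.2.2.2.2.2.1 i else b.2.2.2.2.2.2.2.1 i,
   b.2.2.2.2.2.2.2.2.1, b.2.2.2.2.2.2.2.2.2)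

/-- Swap the agent-2 private coordinates. -/
def tau2 (t : ℕ) (a b : Traj M) : Traj M :=
  (b.1, b.2.1, fun i => if (i:ℕ) ≤ t then a.2.2.1 i else b.2.2.1 i, b.2.2.2.1, b.2.2.2.2.1,
   b.2.2.2.2.2.1, b.2.2.2.2.2.2.1, b.2.2.2.2.2.2.2.1,
   fun i => if (i:ℕ) ≤ t then a.2.2.2.2.2.2.2.2.1 i else b.2.2.2.2.2.2.2.2.1 i,
   b.2.2.2.2.2.2.2.2.2)

lemma tau1_invol (t : ℕ) (a b : Traj M) : tau1 t (tau1 t a b) (tau1 t b a) = a := by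
  obtain ⟨a1,a2,a3,a4,a5,a6,a7,a8,a9,a10⟩ := a
  obtain ⟨b1,b2,b3,b4,b5,b6,b7,b8,b9,b10⟩ := b
  simp only [tau1, Prod.mk.injEq, true_and, and_true]
  constructor <;>
  · funext i
    by_cases hi : (i:ℕ) ≤ t <;> simp [hi]

lemma tau2_invol (t : ℕ) (a b : Traj M) : tau2 t (tau2 t a b) (tau2 t b a) = a := by
  obtain ⟨a1,a2,a3,a4,a5,a6,a7,a8,a9,a10⟩ := a
  obtain ⟨b1,b2,b3,b4,b5,b6,b7,b8,b9,b10⟩ := b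
  simp only [tau2, Prod.mk.injEq, true_and, and_true]
  constructor <;>
  · funext i
    by_cases hi : (i:ℕ) ≤ t <;> simp [hi]

lemma teamComP_tau1 (t t' : ℕ) (a b : Traj M) :
    teamComP t' (tau1 t a b) = teamComP t' b := rfl

lemma teamComP_tau2 (t t' : ℕ) (a b : Traj M) :
    teamComP t' (tau2 t a b) = teamComP t' b := rfl

lemma infoCp_tau1 (t t' : ℕ) (a b : Traj M) :
    IS.infoCp t' (tau1 t a b) = IS.infoCp t' b ∧ IS.infoDp t' (tau1 t a b) = IS.infoDp t' b :=
  (IS.cdp_team t' _ _).mpr rfl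

lemma infoCp_tau2 (t t' : ℕ) (a b : Traj M) :
    IS.infoCp t' (tau2 t a b) = IS.infoCp t' b ∧ IS.infoDp t' (tau2 t a b) = IS.infoDp t' b :=
  (IS.cdp_team t' _ _).mpr rfl

lemma tau1_acc (t : ℕ) (a b : Traj M) {i : ℕ} (hi : i ≤ t) (hiT : i < M.T) :
    X1v (tau1 t a b) i = X1v a i ∧ U1v (tau1 t a b) i = U1v a i := by
  constructor <;> simp [X1v, U1v, tau1, idx_lt hiT, hi]

lemma tau2_acc (t : ℕ) (a b : Traj M) {i : ℕ} (hi : i ≤ t) (hiT : i < M.T) :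
    X2v (tau2 t a b) i = X2v a i ∧ U2v (tau2 t a b) i = U2v a i := by
  constructor <;> simp [X2v, U2v, tau2, idx_lt hiT, hi]

lemma teamComP_ext {t' : ℕ} {a b : Traj M} (h : teamComP t' a = teamComP t' b) :
    pre (t'+1) (X0v a) = pre (t'+1) (X0v b) ∧ pre (t'+1) (Mv a) = pre (t'+1) (Mv b) ∧
    pre (t'+1) (Zv a) = pre (t'+1) (Zv b) ∧ pre t' (UAv a) = pre t' (UAv b) ∧
    pre (t'+1) (Yv a) = pre (t'+1) (Yv b) := by
  simp only [teamComP, Prod.mk.injEq] at h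
  exact h

lemma Cf_tau1 (γ : AdvStrategy M IS.C) (t : ℕ) (a b : Traj M) :
    Cf IS γ t (tau1 t a b) = Cf IS γ t b := by
  unfold Cf
  rw [show X0v (tau1 t a b) = X0v b from rfl, show Mv (tau1 t a b) = Mv b from rfl,
    show Zv (tau1 t a b) = Zv b from rfl, show Yv (tau1 t a b) = Yv b from rfl,
    show UAv (tau1 t a b) = UAv b from rfl]
  refine congrArg₂ _ (congrArg₂ _ rfl ?_) rfl
  exact Finset.prod_congr rfl fun s _ => by rw [(infoCp_tau1 IS t s a b).1]

lemma Cf_tau2 (γ : AdvStrategy M IS.C) (t : ℕ) (a b : Traj M) :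
    Cf IS γ t (tau2 t a b) = Cf IS γ t b := by
  unfold Cf
  rw [show X0v (tau2 t a b) = X0v b from rfl, show Mv (tau2 t a b) = Mv b from rfl,
    show Zv (tau2 t a b) = Zv b from rfl, show Yv (tau2 t a b) = Yv b from rfl,
    show UAv (tau2 t a b) = UAv b from rfl]
  refine congrArg₂ _ (congrArg₂ _ rfl ?_) rfl
  exact Finset.prod_congr rfl fun s _ => by rw [(infoCp_tau2 IS t s a b).1]

lemma B2f_tau1 (σ : TeamStrategy M) (t : ℕ) (a b : Traj M) :
    B2f σ t (tau1 t a b) = B2f σ t b := rfl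

lemma B1f_tau2 (σ : TeamStrategy M) (t : ℕ) (a b : Traj M) :
    B1f σ t (tau2 t a b) = B1f σ t b := rfl

lemma B1f_tau1 (σ : TeamStrategy M) {t : ℕ} (htT : t < M.T) {a b : Traj M}
    (h : teamComP t a = teamComP t b) : B1f σ t (tau1 t a b) = B1f σ t a := by
  obtain ⟨h0, hM, hZ, hUA, hY⟩ := teamComP_ext h
  have e0 : ∀ i < t+1, X0v (tau1 t a b) i = X0v a i := fun i hi => (pre_eq_imp h0 i hi).symm
  have eM : ∀ i < t+1, Mv (tau1 t a b) i = Mv a i := fun i hi => (pre_eq_imp hM i hi).symm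
  have eZ : ∀ i < t+1, Zv (tau1 t a b) i = Zv a i := fun i hi => (pre_eq_imp hZ i hi).symm
  have eY : ∀ i < t+1, Yv (tau1 t a b) i = Yv a i := fun i hi => (pre_eq_imp hY i hi).symm
  have eUA : ∀ i < t, UAv (tau1 t a b) i = UAv a i := fun i hi => (pre_eq_imp hUA i hi).symm
  have e1 : ∀ i ≤ t, X1v (tau1 t a b) i = X1v a i :=
    fun i hi => (tau1_acc t a b hi (by omega)).1
  have eU1 : ∀ i ≤ t, U1v (tau1 t a b) i = U1v a i :=
    fun i hi => (tau1_acc t a b hi (by omega)).2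
  have hinfo1 : ∀ s ≤ t, info1 s (tau1 t a b) = info1 s a := by
    intro s hs
    unfold info1
    rw [pre_congr (fun i hi => e0 i (by omega)), pre_congr (fun i hi => e1 i (by omega)),
      pre_congr (fun i hi => eU1 i (by omega)), pre_congr (fun i hi => eM i (by omega)),
      pre_congr (fun i hi => eZ i (by omega)), pre_congr (fun i hi => eUA i (by omega)),
      pre_congr (fun i hi => eY i (by omega))]
  have hinfo1p : ∀ s ≤ t, info1p s (tau1 t a b) = info1p s a := by
    intro s hs
    unfold info1p
    rw [pre_congr (fun i hi => e0 i (by omega)), pre_congr (fun i hi => e1 i (by omega)),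
      pre_congr (fun i hi => eU1 i (by omega)), pre_congr (fun i hi => eM i (by omega)),
      pre_congr (fun i hi => eZ i (by omega)), pre_congr (fun i hi => eUA i (by omega)),
      pre_congr (fun i hi => eY i (by omega))]
  unfold B1f
  rw [e1 0 (by omega)]
  congr 1
  · congr 1
    refine Finset.prod_congr rfl fun s hs => ?_
    have hs' : s ≤ t := by have := Finset.mem_range.mp hs; omega
    have eM1 : M1v (tau1 t a b) s = M1v a s := congrArg Prod.fst (eM s (by omega))
    rw [hinfo1 s hs', hinfo1p s hs', eM1, eU1 s hs', e1 s hs', eM s (by omega), eZ s (by omega)]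
  · refine Finset.prod_congr rfl fun s hs => ?_
    have hs' : s < t := Finset.mem_range.mp hs
    rw [e0 s (by omega), e1 s (by omega), eU1 s (by omega), e1 (s+1) (by omega)]

lemma B2f_tau2 (σ : TeamStrategy M) {t : ℕ} (htT : t < M.T) {a b : Traj M}
    (h : teamComP t a = teamComP t b) : B2f σ t (tau2 t a b) = B2f σ t a := by
  obtain ⟨h0, hM, hZ, hUA, hY⟩ := teamComP_ext h
  have e0 : ∀ i < t+1, X0v (tau2 t a b) i = X0v a i := fun i hi => (pre_eq_imp h0 i hi).symm
  have eM : ∀ i < t+1, Mv (tau2 t a b) i = Mv a i := fun i hi => (pre_eq_imp hM i hi).symm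
  have eZ : ∀ i < t+1, Zv (tau2 t a b) i = Zv a i := fun i hi => (pre_eq_imp hZ i hi).symm
  have eY : ∀ i < t+1, Yv (tau2 t a b) i = Yv a i := fun i hi => (pre_eq_imp hY i hi).symm
  have eUA : ∀ i < t, UAv (tau2 t a b) i = UAv a i := fun i hi => (pre_eq_imp hUA i hi).symm
  have e2 : ∀ i ≤ t, X2v (tau2 t a b) i = X2v a i :=
    fun i hi => (tau2_acc t a b hi (by omega)).1
  have eU2 : ∀ i ≤ t, U2v (tau2 t a b) i = U2v a i :=
    fun i hi => (tau2_acc t a b hi (by omega)).2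
  have hinfo2 : ∀ s ≤ t, info2 s (tau2 t a b) = info2 s a := by
    intro s hs
    unfold info2
    rw [pre_congr (fun i hi => e0 i (by omega)), pre_congr (fun i hi => e2 i (by omega)),
      pre_congr (fun i hi => eU2 i (by omega)), pre_congr (fun i hi => eM i (by omega)),
      pre_congr (fun i hi => eZ i (by omega)), pre_congr (fun i hi => eUA i (by omega)),
      pre_congr (fun i hi => eY i (by omega))]
  have hinfo2p : ∀ s ≤ t, info2p s (tau2 t a b) = info2p s a := by
    intro s hs
    unfold info2p
    rw [pre_congr (fun i hi => e0 i (by omega)), pre_congr (fun i hi => e2 i (by omega)),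
      pre_congr (fun i hi => eU2 i (by omega)), pre_congr (fun i hi => eM i (by omega)),
      pre_congr (fun i hi => eZ i (by omega)), pre_congr (fun i hi => eUA i (by omega)),
      pre_congr (fun i hi => eY i (by omega))]
  unfold B2f
  rw [e2 0 (by omega)]
  congr 1
  · congr 1
    refine Finset.prod_congr rfl fun s hs => ?_
    have hs' : s ≤ t := by have := Finset.mem_range.mp hs; omega
    have eM2 : M2v (tau2 t a b) s = M2v a s :=
      congrArg Prod.snd (eM s (by omega))
    rw [hinfo2 s hs', hinfo2p s hs', eM2, eU2 s hs', e2 s hs', eM s (by omega), eZ s (by omega)]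
  · refine Finset.prod_congr rfl fun s hs => ?_
    have hs' : s < t := Finset.mem_range.mp hs
    rw [e0 s (by omega), e2 s (by omega), eU2 s (by omega), e2 (s+1) (by omega)]

lemma tau1_preX1 {t : ℕ} (htT : t < M.T) (a b : Traj M) :
    pre (t+1) (X1v (tau1 t a b)) = pre (t+1) (X1v a) ∧
    pre (t+1) (U1v (tau1 t a b)) = pre (t+1) (U1v a) :=
  ⟨pre_congr fun i hi => (tau1_acc t a b (by omega) (by omega)).1,
   pre_congr fun i hi => (tau1_acc t a b (by omega) (by omega)).2⟩

lemma tau2_preX2 {t : ℕ} (htT : t < M.T) (a b : Traj M) :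
    pre (t+1) (X2v (tau2 t a b)) = pre (t+1) (X2v a) ∧
    pre (t+1) (U2v (tau2 t a b)) = pre (t+1) (U2v a) :=
  ⟨pre_congr fun i hi => (tau2_acc t a b (by omega) (by omega)).1,
   pre_congr fun i hi => (tau2_acc t a b (by omega) (by omega)).2⟩

lemma tau1_preX2 (t : ℕ) (a b : Traj M) :
    pre (t+1) (X2v (tau1 t a b)) = pre (t+1) (X2v b) ∧
    pre (t+1) (U2v (tau1 t a b)) = pre (t+1) (U2v b) := ⟨rfl, rfl⟩

lemma tau2_preX1 (t : ℕ) (a b : Traj M) :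
    pre (t+1) (X1v (tau2 t a b)) = pre (t+1) (X1v b) ∧
    pre (t+1) (U1v (tau2 t a b)) = pre (t+1) (U1v b) := ⟨rfl, rfl⟩

end Lemma1Proof7

section Lemma1Proof8

variable {M : Model}

noncomputable instance fintypeTrajPair (M : Model) : Fintype (Traj M × Traj M) :=
  have h : Fintype (Traj M) := inferInstance
  @instFintypeProd _ _ h h

lemma sumSwap (w₁ w₂ w₃ w₄ : Traj M → ℝ) (P Q P' Q' : Traj M → Prop)
    (tau : Traj M → Traj M → Traj M) (hinv : ∀ a b, tau (tau a b) (tau b a) = a)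
    (hpt : ∀ a b, (if P' (tau a b) then w₃ (tau a b) else 0) *
        (if Q' (tau b a) then w₄ (tau b a) else 0)
      = (if P a then w₁ a else 0) * (if Q b then w₂ b else 0)) :
    (∑ a : Traj M, if P a then w₁ a else 0) * (∑ b : Traj M, if Q b then w₂ b else 0)
      = (∑ a : Traj M, if P' a then w₃ a else 0) *
        (∑ b : Traj M, if Q' b then w₄ b else 0) := by
  classical
  have hΦ : Function.Involutive
      (fun p : Traj M × Traj M => (tau p.1 p.2, tau p.2 p.1)) := by
    intro p
    obtain ⟨a, b⟩ := p
    show (tau (tau a b) (tau b a), tau (tau b a) (tau a b)) = (a, b)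
    rw [hinv a b, hinv b a]
  have e1 : (∑ a : Traj M, if P a then w₁ a else 0) * (∑ b : Traj M, if Q b then w₂ b else 0)
      = ∑ p : Traj M × Traj M,
          (if P p.1 then w₁ p.1 else 0) * (if Q p.2 then w₂ p.2 else 0) := by
    rw [Finset.sum_mul_sum, Fintype.sum_prod_type (f := fun p : Traj M × Traj M =>
      (if P p.1 then w₁ p.1 else 0) * (if Q p.2 then w₂ p.2 else 0))]
  have e2 : (∑ a : Traj M, if P' a then w₃ a else 0) *
        (∑ b : Traj M, if Q' b then w₄ b else 0)
      = ∑ p : Traj M × Traj M,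
          (if P' p.1 then w₃ p.1 else 0) * (if Q' p.2 then w₄ p.2 else 0) := by
    rw [Finset.sum_mul_sum, Fintype.sum_prod_type (f := fun p : Traj M × Traj M =>
      (if P' p.1 then w₃ p.1 else 0) * (if Q' p.2 then w₄ p.2 else 0))]
  rw [e1, e2]
  rw [← Equiv.sum_comp (Function.Involutive.toPerm _ hΦ)
    (fun p : Traj M × Traj M => (if P' p.1 then w₃ p.1 else 0) * (if Q' p.2 then w₄ p.2 else 0))]
  refine Finset.sum_congr rfl fun p _ => ?_
  simp only [Function.Involutive.coe_toPerm]
  exact (hpt p.1 p.2).symm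

end Lemma1Proof8

/-- Lemma 1 of the paper, after communication. -/
theorem lemma1_after_communication (M : Model) (IS : InfoStructure M)
    (σ : TeamStrategy M) (γ : AdvStrategy M IS.C)
    (t : ℕ) (ht : t < M.T) (c : IS.C) (d : IS.D)
    (hpos : 0 < pr σ γ IS.infoCp (fun ω => IS.infoCp t ω = c ∧ IS.infoDp t ω = d))
    (ξ1 : List M.X1) (ξ2 : List M.X2) (υ1 : List M.U1) (υ2 : List M.U2) :
    (cpr σ γ IS.infoCp (fun ω => IS.infoCp t ω = c ∧ IS.infoDp t ω = d)
        (fun ω => pre (t+1) (X1v ω) = ξ1 ∧ pre (t+1) (X2v ω) = ξ2 ∧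
                  pre (t+1) (U1v ω) = υ1 ∧ pre (t+1) (U2v ω) = υ2)
      = cpr σ γ IS.infoCp (fun ω => IS.infoCp t ω = c ∧ IS.infoDp t ω = d)
          (fun ω => pre (t+1) (X1v ω) = ξ1 ∧ pre (t+1) (U1v ω) = υ1) *
        cpr σ γ IS.infoCp (fun ω => IS.infoCp t ω = c ∧ IS.infoDp t ω = d)
          (fun ω => pre (t+1) (X2v ω) = ξ2 ∧ pre (t+1) (U2v ω) = υ2)) ∧
    (∀ (σ' : TeamStrategy M) (γ' : AdvStrategy M IS.C),
        σ'.f1 = σ.f1 → σ'.g1 = σ.g1 →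
        0 < pr σ' γ' IS.infoCp (fun ω => IS.infoCp t ω = c ∧ IS.infoDp t ω = d) →
        cpr σ' γ' IS.infoCp (fun ω => IS.infoCp t ω = c ∧ IS.infoDp t ω = d)
            (fun ω => pre (t+1) (X1v ω) = ξ1 ∧ pre (t+1) (U1v ω) = υ1)
          = cpr σ γ IS.infoCp (fun ω => IS.infoCp t ω = c ∧ IS.infoDp t ω = d)
              (fun ω => pre (t+1) (X1v ω) = ξ1 ∧ pre (t+1) (U1v ω) = υ1)) ∧
    (∀ (σ' : TeamStrategy M) (γ' : AdvStrategy M IS.C),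
        σ'.f2 = σ.f2 → σ'.g2 = σ.g2 →
        0 < pr σ' γ' IS.infoCp (fun ω => IS.infoCp t ω = c ∧ IS.infoDp t ω = d) →
        cpr σ' γ' IS.infoCp (fun ω => IS.infoCp t ω = c ∧ IS.infoDp t ω = d)
            (fun ω => pre (t+1) (X2v ω) = ξ2 ∧ pre (t+1) (U2v ω) = υ2)
          = cpr σ γ IS.infoCp (fun ω => IS.infoCp t ω = c ∧ IS.infoDp t ω = d)
              (fun ω => pre (t+1) (X2v ω) = ξ2 ∧ pre (t+1) (U2v ω) = υ2)) := by
  classical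
  set E : Traj M → Prop := fun ω => IS.infoCp t ω = c ∧ IS.infoDp t ω = d with hE
  set F1 : Traj M → Prop := fun ω => pre (t+1) (X1v ω) = ξ1 ∧ pre (t+1) (U1v ω) = υ1 with hF1
  set F2 : Traj M → Prop := fun ω => pre (t+1) (X2v ω) = ξ2 ∧ pre (t+1) (U2v ω) = υ2 with hF2
  set F : Traj M → Prop := fun ω => pre (t+1) (X1v ω) = ξ1 ∧ pre (t+1) (X2v ω) = ξ2 ∧
    pre (t+1) (U1v ω) = υ1 ∧ pre (t+1) (U2v ω) = υ2 with hF
  -- measurability with respect to the prefix up to time t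
  have hprefix : ∀ {ω ω' : Traj M}, agreeN t ω ω' →
      pre (t+1) (X1v ω) = pre (t+1) (X1v ω') ∧ pre (t+1) (X2v ω) = pre (t+1) (X2v ω') ∧
      pre (t+1) (U1v ω) = pre (t+1) (U1v ω') ∧ pre (t+1) (U2v ω) = pre (t+1) (U2v ω') := by
    intro ω ω' h
    exact ⟨pre_congr fun i hi => (agreeN_acc h (by omega) (by omega)).2.1,
      pre_congr fun i hi => (agreeN_acc h (by omega) (by omega)).2.2.1,
      pre_congr fun i hi => (agreeN_acc h (by omega) (by omega)).2.2.2.2.2.2.2.1,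
      pre_congr fun i hi => (agreeN_acc h (by omega) (by omega)).2.2.2.2.2.2.2.2.1⟩
  have hEmeas : ∀ ω ω' : Traj M, agreeN t ω ω' → (E ω ↔ E ω') := by
    intro ω ω' h
    have hteam : teamComP t ω = teamComP t ω' := (info_congr ht h (le_refl t)).2.2.2.2
    have hcd := (IS.cdp_team t ω ω').mpr hteam
    exact ⟨fun hx => ⟨hcd.1.symm.trans hx.1, hcd.2.symm.trans hx.2⟩,
      fun hx => ⟨hcd.1.trans hx.1, hcd.2.trans hx.2⟩⟩
  have hmeasF1E : ∀ ω ω' : Traj M, agreeN t ω ω' → ((F1 ω ∧ E ω) ↔ (F1 ω' ∧ E ω')) := by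
    intro ω ω' h
    obtain ⟨e1, e2, e3, e4⟩ := hprefix h
    simp only [hF1]
    rw [e1, e3]
    exact and_congr Iff.rfl (hEmeas ω ω' h)
  have hmeasF2E : ∀ ω ω' : Traj M, agreeN t ω ω' → ((F2 ω ∧ E ω) ↔ (F2 ω' ∧ E ω')) := by
    intro ω ω' h
    obtain ⟨e1, e2, e3, e4⟩ := hprefix h
    simp only [hF2]
    rw [e2, e4]
    exact and_congr Iff.rfl (hEmeas ω ω' h)
  have hmeasFE : ∀ ω ω' : Traj M, agreeN t ω ω' → ((F ω ∧ E ω) ↔ (F ω' ∧ E ω')) := by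
    intro ω ω' h
    obtain ⟨e1, e2, e3, e4⟩ := hprefix h
    simp only [hF]
    rw [e1, e2, e3, e4]
    exact and_congr Iff.rfl (hEmeas ω ω' h)
  have condF : ∀ ω, F ω ↔ (F1 ω ∧ F2 ω) := by
    intro ω
    simp only [hF, hF1, hF2]
    tauto
  -- the common normalizing constant
  let ω₀ : Traj M := (fun _ => Classical.arbitrary _, fun _ => Classical.arbitrary _,
    fun _ => Classical.arbitrary _, fun _ => Classical.arbitrary _,
    fun _ => Classical.arbitrary _, fun _ => Classical.arbitrary _,
    fun _ => Classical.arbitrary _, fun _ => Classical.arbitrary _,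
    fun _ => Classical.arbitrary _, fun _ => Classical.arbitrary _)
  set Nr : ℝ := ∑ ω' : Traj M, if agreeN t ω₀ ω' then (1:ℝ) else 0 with hNr
  have hNrpos : 0 < Nr := by rw [hNr]; exact Npos t ω₀
  have hNrne : Nr ≠ 0 := ne_of_gt hNrpos
  have grp : ∀ (σ₁ : TeamStrategy M) (γ₁ : AdvStrategy M IS.C) (P : Traj M → Prop),
      (∀ ω ω', agreeN t ω ω' → (P ω ↔ P ω')) →
      (∑ ω : Traj M, if P ω then Rlev IS σ₁ γ₁ t ω else 0) = Nr * pr σ₁ γ₁ IS.infoCp P := by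
    intro σ₁ γ₁ P hP
    rw [hNr]
    exact grouping IS σ₁ γ₁ (by omega) P hP ω₀
  -- transfer of events along the swap maps
  have hEtau1 : ∀ a b : Traj M, E (tau1 t a b) ↔ E b := by
    intro a b
    obtain ⟨h1, h2⟩ := infoCp_tau1 IS t t a b
    exact ⟨fun hx => ⟨h1.symm.trans hx.1, h2.symm.trans hx.2⟩,
      fun hx => ⟨h1.trans hx.1, h2.trans hx.2⟩⟩
  have hEtau2 : ∀ a b : Traj M, E (tau2 t a b) ↔ E b := by
    intro a b
    obtain ⟨h1, h2⟩ := infoCp_tau2 IS t t a b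
    exact ⟨fun hx => ⟨h1.symm.trans hx.1, h2.symm.trans hx.2⟩,
      fun hx => ⟨h1.trans hx.1, h2.trans hx.2⟩⟩
  have hF1tau1 : ∀ a b : Traj M, F1 (tau1 t a b) ↔ F1 a := by
    intro a b
    simp only [hF1]
    rw [(tau1_preX1 ht a b).1, (tau1_preX1 ht a b).2]
  have hF2tau1 : ∀ a b : Traj M, F2 (tau1 t a b) ↔ F2 b := by
    intro a b
    simp only [hF2]
    rw [(tau1_preX2 t a b).1, (tau1_preX2 t a b).2]
  have hF2tau2 : ∀ a b : Traj M, F2 (tau2 t a b) ↔ F2 a := by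
    intro a b
    simp only [hF2]
    rw [(tau2_preX2 ht a b).1, (tau2_preX2 ht a b).2]
  have hTeq : ∀ {a b : Traj M}, E a → E b → teamComP t a = teamComP t b := by
    intro a b ha hb
    exact (IS.cdp_team t a b).mp ⟨ha.1.trans hb.1.symm, ha.2.trans hb.2.symm⟩
  refine ⟨?_, ?_, ?_⟩
  · -- Goal 1 : conditional independence
    have keyA := sumSwap (Rlev IS σ γ t) (Rlev IS σ γ t) (Rlev IS σ γ t) (Rlev IS σ γ t)
      (fun ω => F ω ∧ E ω) E (fun ω => F1 ω ∧ E ω) (fun ω => F2 ω ∧ E ω)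
      (tau1 t) (tau1_invol t) (fun a b => by
      by_cases hEa : E a
      · by_cases hEb : E b
        · have hT := hTeq hEa hEb
          have c1 : (F1 (tau1 t a b) ∧ E (tau1 t a b)) ↔ (F1 a ∧ E b) :=
            and_congr (hF1tau1 a b) (hEtau1 a b)
          have c2 : (F2 (tau1 t b a) ∧ E (tau1 t b a)) ↔ (F2 a ∧ E a) :=
            and_congr (hF2tau1 b a) (hEtau1 b a)
          by_cases hf1 : F1 a
          · by_cases hf2 : F2 a
            · rw [if_pos (c1.mpr ⟨hf1, hEb⟩), if_pos (c2.mpr ⟨hf2, hEa⟩),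
                if_pos (show F a ∧ E a from ⟨(condF a).mpr ⟨hf1, hf2⟩, hEa⟩), if_pos hEb,
                Rsplit IS σ γ t (tau1 t a b), Rsplit IS σ γ t (tau1 t b a),
                Rsplit IS σ γ t a, Rsplit IS σ γ t b,
                Cf_tau1 IS γ t a b, Cf_tau1 IS γ t b a,
                B1f_tau1 σ ht hT, B1f_tau1 σ ht hT.symm,
                B2f_tau1 σ t a b, B2f_tau1 σ t b a]
              ring
            · rw [if_neg (fun h => hf2 (c2.mp h).1), mul_zero,
                if_neg (fun h : F a ∧ E a => hf2 ((condF a).mp h.1).2), zero_mul]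
          · rw [if_neg (fun h => hf1 (c1.mp h).1), zero_mul,
              if_neg (fun h : F a ∧ E a => hf1 ((condF a).mp h.1).1), zero_mul]
        · rw [if_neg (fun h : F1 (tau1 t a b) ∧ E (tau1 t a b) =>
              hEb ((hEtau1 a b).mp h.2)), zero_mul, if_neg hEb, mul_zero]
      · rw [if_neg (fun h : F2 (tau1 t b a) ∧ E (tau1 t b a) =>
            hEa ((hEtau1 b a).mp h.2)), mul_zero,
          if_neg (fun h : F a ∧ E a => hEa h.2), zero_mul])
    have key1 : pr σ γ IS.infoCp (fun ω => F ω ∧ E ω) * pr σ γ IS.infoCp E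
        = pr σ γ IS.infoCp (fun ω => F1 ω ∧ E ω) * pr σ γ IS.infoCp (fun ω => F2 ω ∧ E ω) := by
      have hA : Nr * pr σ γ IS.infoCp (fun ω => F ω ∧ E ω) * (Nr * pr σ γ IS.infoCp E)
          = Nr * pr σ γ IS.infoCp (fun ω => F1 ω ∧ E ω) *
            (Nr * pr σ γ IS.infoCp (fun ω => F2 ω ∧ E ω)) := by
        rw [← grp σ γ (fun ω => F ω ∧ E ω) hmeasFE, ← grp σ γ E hEmeas,
          ← grp σ γ (fun ω => F1 ω ∧ E ω) hmeasF1E, ← grp σ γ (fun ω => F2 ω ∧ E ω) hmeasF2E]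
        exact keyA
      apply mul_left_cancel₀ (mul_ne_zero hNrne hNrne)
      linear_combination hA
    have hprE : pr σ γ IS.infoCp E ≠ 0 := ne_of_gt hpos
    simp only [cpr]
    rw [div_mul_div_comm, div_eq_div_iff hprE (mul_ne_zero hprE hprE)]
    linear_combination pr σ γ IS.infoCp E * key1
  · -- Goal 2 : agent 1's conditional law depends only on agent 1's strategy
    intro σ' γ' hf1s hg1s hpos'
    have keyB := sumSwap (Rlev IS σ' γ' t) (Rlev IS σ γ t) (Rlev IS σ γ t) (Rlev IS σ' γ' t)
      (fun ω => F1 ω ∧ E ω) E (fun ω => F1 ω ∧ E ω) E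
      (tau1 t) (tau1_invol t) (fun a b => by
      by_cases hEa : E a
      · by_cases hEb : E b
        · have hT := hTeq hEa hEb
          have c1 : (F1 (tau1 t a b) ∧ E (tau1 t a b)) ↔ (F1 a ∧ E b) :=
            and_congr (hF1tau1 a b) (hEtau1 a b)
          by_cases hf1 : F1 a
          · rw [if_pos (c1.mpr ⟨hf1, hEb⟩), if_pos ((hEtau1 b a).mpr hEa),
              if_pos (show F1 a ∧ E a from ⟨hf1, hEa⟩), if_pos hEb,
              Rsplit IS σ γ t (tau1 t a b), Rsplit IS σ' γ' t (tau1 t b a),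
              Rsplit IS σ' γ' t a, Rsplit IS σ γ t b,
              Cf_tau1 IS γ t a b, Cf_tau1 IS γ' t b a,
              B1f_tau1 σ ht hT, B1f_tau1 σ' ht hT.symm,
              B2f_tau1 σ t a b, B2f_tau1 σ' t b a,
              B1f_strat hf1s hg1s t a, B1f_strat hf1s hg1s t b]
            ring
          · rw [if_neg (fun h => hf1 (c1.mp h).1), zero_mul,
              if_neg (fun h : F1 a ∧ E a => hf1 h.1), zero_mul]
        · rw [if_neg (fun h : F1 (tau1 t a b) ∧ E (tau1 t a b) =>
              hEb ((hEtau1 a b).mp h.2)), zero_mul, if_neg hEb, mul_zero]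
      · rw [if_neg (fun h : E (tau1 t b a) => hEa ((hEtau1 b a).mp h)), mul_zero,
          if_neg (fun h : F1 a ∧ E a => hEa h.2), zero_mul])
    have key2 : pr σ' γ' IS.infoCp (fun ω => F1 ω ∧ E ω) * pr σ γ IS.infoCp E
        = pr σ γ IS.infoCp (fun ω => F1 ω ∧ E ω) * pr σ' γ' IS.infoCp E := by
      have hA : Nr * pr σ' γ' IS.infoCp (fun ω => F1 ω ∧ E ω) * (Nr * pr σ γ IS.infoCp E)
          = Nr * pr σ γ IS.infoCp (fun ω => F1 ω ∧ E ω) *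
            (Nr * pr σ' γ' IS.infoCp E) := by
        rw [← grp σ' γ' (fun ω => F1 ω ∧ E ω) hmeasF1E, ← grp σ γ E hEmeas,
          ← grp σ γ (fun ω => F1 ω ∧ E ω) hmeasF1E, ← grp σ' γ' E hEmeas]
        exact keyB
      apply mul_left_cancel₀ (mul_ne_zero hNrne hNrne)
      linear_combination hA
    simp only [cpr]
    rw [div_eq_div_iff (ne_of_gt hpos') (ne_of_gt hpos)]
    exact key2
  · -- Goal 3 : agent 2's conditional law depends only on agent 2's strategy
    intro σ' γ' hf2s hg2s hpos'
    have keyC := sumSwap (Rlev IS σ' γ' t) (Rlev IS σ γ t) (Rlev IS σ γ t) (Rlev IS σ' γ' t)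
      (fun ω => F2 ω ∧ E ω) E (fun ω => F2 ω ∧ E ω) E
      (tau2 t) (tau2_invol t) (fun a b => by
      by_cases hEa : E a
      · by_cases hEb : E b
        · have hT := hTeq hEa hEb
          have c1 : (F2 (tau2 t a b) ∧ E (tau2 t a b)) ↔ (F2 a ∧ E b) :=
            and_congr (hF2tau2 a b) (hEtau2 a b)
          by_cases hf2 : F2 a
          · rw [if_pos (c1.mpr ⟨hf2, hEb⟩), if_pos ((hEtau2 b a).mpr hEa),
              if_pos (show F2 a ∧ E a from ⟨hf2, hEa⟩), if_pos hEb,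
              Rsplit IS σ γ t (tau2 t a b), Rsplit IS σ' γ' t (tau2 t b a),
              Rsplit IS σ' γ' t a, Rsplit IS σ γ t b,
              Cf_tau2 IS γ t a b, Cf_tau2 IS γ' t b a,
              B2f_tau2 σ ht hT, B2f_tau2 σ' ht hT.symm,
              B1f_tau2 σ t a b, B1f_tau2 σ' t b a,
              B2f_strat hf2s hg2s t a, B2f_strat hf2s hg2s t b]
            ring
          · rw [if_neg (fun h => hf2 (c1.mp h).1), zero_mul,
              if_neg (fun h : F2 a ∧ E a => hf2 h.1), zero_mul]
        · rw [if_neg (fun h : F2 (tau2 t a b) ∧ E (tau2 t a b) =>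
              hEb ((hEtau2 a b).mp h.2)), zero_mul, if_neg hEb, mul_zero]
      · rw [if_neg (fun h : E (tau2 t b a) => hEa ((hEtau2 b a).mp h)), mul_zero,
          if_neg (fun h : F2 a ∧ E a => hEa h.2), zero_mul])
    have key3 : pr σ' γ' IS.infoCp (fun ω => F2 ω ∧ E ω) * pr σ γ IS.infoCp E
        = pr σ γ IS.infoCp (fun ω => F2 ω ∧ E ω) * pr σ' γ' IS.infoCp E := by
      have hA : Nr * pr σ' γ' IS.infoCp (fun ω => F2 ω ∧ E ω) * (Nr * pr σ γ IS.infoCp E)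
          = Nr * pr σ γ IS.infoCp (fun ω => F2 ω ∧ E ω) *
            (Nr * pr σ' γ' IS.infoCp E) := by
        rw [← grp σ' γ' (fun ω => F2 ω ∧ E ω) hmeasF2E, ← grp σ γ E hEmeas,
          ← grp σ γ (fun ω => F2 ω ∧ E ω) hmeasF2E, ← grp σ' γ' E hEmeas]
        exact keyC
      apply mul_left_cancel₀ (mul_ne_zero hNrne hNrne)
      linear_combination hA
    simp only [cpr]
    rw [div_eq_div_iff (ne_of_gt hpos') (ne_of_gt hpos)]
    exact key3

end TA
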